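/- arXiv:quant-ph/0405166 — 5 statements merged into one kernel-verified Lean document; each statement's English description precedes it below -/
import Mathlib

section
/- If ω is a product state extension of states ω₁ on A(I) and ω₂ on A(J), i.e. ω(A B) = ω₁(A)ω₂(B) for all A ∈ A(I), B ∈ A(J), then at least one of ω₁, ω₂ is even (invariant under the grading automorphism Θ). -/
open scoped ComplexOrder

/-- The canonical anticommutation relations for a family of annihilation operators. -/
def IsCAR {A : Type*} [Ring A] [StarRing A] {ι : Type*} [DecidableEq ι] (a : ι → A) : Prop :=
  (∀ i j, star (a i) * a j + a j * star (a i) = if i = j then (1 : A) else 0) ∧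
  (∀ i j, star (a i) * star (a j) + star (a j) * star (a i) = 0) ∧
  (∀ i j, a i * a j + a j * a i = 0)

/-- A state: a normalized positive linear functional. -/
def IsState {A : Type*} [Ring A] [StarRing A] [Algebra ℂ A] (φ : A → ℂ) : Prop :=
  (∀ x y, φ (x + y) = φ x + φ y) ∧ (∀ (c : ℂ) (x : A), φ (c • x) = c * φ x) ∧
  φ 1 = 1 ∧ ∀ x, 0 ≤ φ (star x * x)

section Aux

variable {A : Type*} [Ring A] [StarRing A] [Algebra ℂ A] [StarModule ℂ A]
variable {ι : Type*} [DecidableEq ι] {a : ι → A} {Θ : A ≃⋆ₐ[ℂ] A}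

set_option linter.unusedSectionVars false

/-- A state has zero imaginary part on self-adjoint elements. -/
lemma aux_state_im {φ : A → ℂ} (hφ : IsState φ) {x : A} (hx : star x = x) : (φ x).im = 0 := by
  obtain ⟨hadd, hsmul, hone, hpos⟩ := hφ
  have key : ∀ y : A, (φ (star y * y)).im = 0 := by
    intro y
    have := hpos y
    rw [Complex.le_def] at this
    simpa using this.2.symm
  have h1 : (φ ((1 + x) * (1 + x))).im = 0 := by
    have := key (1 + x)
    rwa [star_add, star_one, hx] at this
  have h2 : (φ (x * x)).im = 0 := by
    have := key x
    rwa [hx] at this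
  have hexp : (1 + x) * (1 + x) = 1 + (x + (x + x * x)) := by noncomm_ring
  rw [hexp, hadd, hadd, hadd, hone] at h1
  simp only [Complex.add_im, Complex.one_im] at h1
  linarith

/-- A state has zero real part on skew-adjoint elements. -/
lemma aux_state_re {φ : A → ℂ} (hφ : IsState φ) {x : A} (hx : star x = -x) : (φ x).re = 0 := by
  have hsa : star (Complex.I • x) = Complex.I • x := by
    rw [star_smul, hx, Complex.star_def, Complex.conj_I, neg_smul, smul_neg, neg_neg]
  have := aux_state_im hφ hsa
  rw [hφ.2.1] at this
  simpa using this

/-- `Θ` is an involution on the subalgebra generated by the `a i`. -/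
lemma aux_theta_sq (hΘ : ∀ i, Θ (a i) = - a i) {s : Set ι} {x : A}
    (hx : x ∈ StarAlgebra.adjoin ℂ (a '' s)) : Θ (Θ x) = x := by
  induction hx using StarAlgebra.adjoin_induction with
  | mem z hz =>
    obtain ⟨i, _, rfl⟩ := hz
    rw [hΘ, map_neg, hΘ, neg_neg]
  | algebraMap r => rw [AlgHomClass.commutes, AlgHomClass.commutes]
  | add x y hx hy ihx ihy => rw [map_add, map_add, ihx, ihy]
  | mul x y hx hy ihx ihy => rw [map_mul, map_mul, ihx, ihy]
  | star x hx ihx => rw [map_star, map_star, ihx]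

/-- `Θ` preserves the subalgebra generated by the `a i`. -/
lemma aux_theta_mem (hΘ : ∀ i, Θ (a i) = - a i) {s : Set ι} {x : A}
    (hx : x ∈ StarAlgebra.adjoin ℂ (a '' s)) : Θ x ∈ StarAlgebra.adjoin ℂ (a '' s) := by
  induction hx using StarAlgebra.adjoin_induction with
  | mem z hz =>
    obtain ⟨i, hi, rfl⟩ := hz
    rw [hΘ]
    exact neg_mem (StarAlgebra.subset_adjoin ℂ _ ⟨i, hi, rfl⟩)
  | algebraMap r => rw [AlgHomClass.commutes]; exact algebraMap_mem _ r
  | add x y hx hy ihx ihy => rw [map_add]; exact add_mem ihx ihy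
  | mul x y hx hy ihx ihy => rw [map_mul]; exact mul_mem ihx ihy
  | star x hx ihx => rw [map_star]; exact star_mem ihx

/-- Generators from `J` move past elements of `A(I)` at the cost of a `Θ`. -/
lemma aux_comm (hCAR : IsCAR a) (hΘ : ∀ i, Θ (a i) = - a i)
    {I J : Set ι} (hdisj : Disjoint I J) {x : A}
    (hx : x ∈ StarAlgebra.adjoin ℂ (a '' I)) :
    ∀ j ∈ J, x * a j = a j * Θ x ∧ x * star (a j) = star (a j) * Θ x := by
  obtain ⟨car1, car2, car3⟩ := hCAR
  induction hx using StarAlgebra.adjoin_induction with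
  | mem z hz =>
    obtain ⟨i, hi, rfl⟩ := hz
    intro j hj
    have hne : j ≠ i := by
      intro h
      exact (Set.disjoint_left.mp hdisj hi) (h ▸ hj)
    constructor
    · have h3 := car3 i j
      rw [hΘ, mul_neg]
      exact add_eq_zero_iff_eq_neg.mp h3
    · have h1 := car1 j i
      rw [if_neg hne] at h1
      rw [hΘ, mul_neg]
      exact add_eq_zero_iff_eq_neg.mp (by rwa [add_comm] at h1)
  | algebraMap r =>
    intro j hj
    refine ⟨?_, ?_⟩
    · rw [AlgHomClass.commutes, Algebra.commutes]
    · rw [AlgHomClass.commutes, Algebra.commutes]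
  | add x y hx hy ihx ihy =>
    intro j hj
    obtain ⟨h1, h2⟩ := ihx j hj
    obtain ⟨h3, h4⟩ := ihy j hj
    constructor
    · rw [map_add, add_mul, h1, h3, mul_add]
    · rw [map_add, add_mul, h2, h4, mul_add]
  | mul x y hx hy ihx ihy =>
    intro j hj
    obtain ⟨h1, h2⟩ := ihx j hj
    obtain ⟨h3, h4⟩ := ihy j hj
    constructor
    · rw [map_mul, mul_assoc, h3, ← mul_assoc, h1, mul_assoc]
    · rw [map_mul, mul_assoc, h4, ← mul_assoc, h2, mul_assoc]
  | star x hx ihx =>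
    intro j hj
    obtain ⟨h1, h2⟩ := ihx j hj
    have hsq : Θ (Θ (star x)) = star x := by
      rw [map_star, map_star, aux_theta_sq hΘ hx]
    constructor
    · -- star of h2 gives: a j * star x = Θ (star x) * a j
      have eA : a j * star x = Θ (star x) * a j := by
        have := congrArg star h2
        rwa [star_mul, star_star, star_mul, star_star, ← map_star] at this
      have := congrArg Θ eA
      rw [map_mul, map_mul, hΘ, hsq, neg_mul, mul_neg] at this
      exact (neg_inj.mp this).symm
    · -- star of h1 gives: star (a j) * star x = Θ (star x) * star (a j)
      have eB : star (a j) * star x = Θ (star x) * star (a j) := by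
        have := congrArg star h1
        rwa [star_mul, star_mul, ← map_star] at this
      have := congrArg Θ eB
      rw [map_mul, map_mul, map_star, hΘ, hsq, star_neg, neg_mul, mul_neg] at this
      exact (neg_inj.mp this).symm

/-- An odd element of `A(I)` graded-commutes with every element of `A(J)`. -/
lemma aux_anticomm (hCAR : IsCAR a) (hΘ : ∀ i, Θ (a i) = - a i)
    {I J : Set ι} (hdisj : Disjoint I J) {x : A}
    (hxmem : x ∈ StarAlgebra.adjoin ℂ (a '' I)) (hodd : Θ x = -x) {y : A}
    (hy : y ∈ StarAlgebra.adjoin ℂ (a '' J)) :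
    x * y = Θ y * x := by
  have hcomm := aux_comm hCAR hΘ hdisj hxmem
  suffices H : x * y = Θ y * x ∧ x * star y = Θ (star y) * x from H.1
  induction hy using StarAlgebra.adjoin_induction with
  | mem z hz =>
    obtain ⟨j, hj, rfl⟩ := hz
    obtain ⟨h1, h2⟩ := hcomm j hj
    constructor
    · rw [h1, hodd, hΘ, mul_neg, neg_mul]
    · rw [h2, hodd, map_star, hΘ, mul_neg, star_neg, neg_mul]
  | algebraMap r =>
    constructor
    · rw [AlgHomClass.commutes, Algebra.commutes]
    · rw [← algebraMap_star_comm, AlgHomClass.commutes, Algebra.commutes]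
  | add y z hy hz ihy ihz =>
    obtain ⟨h1, h2⟩ := ihy
    obtain ⟨h3, h4⟩ := ihz
    constructor
    · rw [map_add, mul_add, h1, h3, add_mul]
    · rw [star_add, map_add, mul_add, h2, h4, add_mul]
  | mul y z hy hz ihy ihz =>
    obtain ⟨h1, h2⟩ := ihy
    obtain ⟨h3, h4⟩ := ihz
    constructor
    · rw [map_mul, ← mul_assoc, h1, mul_assoc, h3, ← mul_assoc]
    · rw [star_mul, map_mul, ← mul_assoc, h4, mul_assoc, h2, ← mul_assoc]
  | star y hy ihy =>
    obtain ⟨h1, h2⟩ := ihy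
    exact ⟨h2, by rwa [star_star]⟩

/-- From a state that is not `Θ`-invariant on a subalgebra, extract a self-adjoint odd
element on which the state does not vanish. -/
lemma aux_extract {φ : A → ℂ} (hφ : IsState φ) (hΘ : ∀ i, Θ (a i) = - a i) {s : Set ι}
    (h : ∃ x ∈ StarAlgebra.adjoin ℂ (a '' s), φ (Θ x) ≠ φ x) :
    ∃ u ∈ StarAlgebra.adjoin ℂ (a '' s), star u = u ∧ Θ u = -u ∧ φ u ≠ 0 := by
  obtain ⟨hadd, hsmul, hone, hpos⟩ := hφ
  obtain ⟨x, hxmem, hx⟩ := h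
  set w : A := (1/2 : ℂ) • (x - Θ x) with hw
  have hwmem : w ∈ StarAlgebra.adjoin ℂ (a '' s) :=
    SMulMemClass.smul_mem _ (sub_mem hxmem (aux_theta_mem hΘ hxmem))
  have hwodd : Θ w = -w := by
    rw [hw, map_smul, map_sub, aux_theta_sq hΘ hxmem, ← smul_neg, neg_sub]
  have hφsub : ∀ p q : A, φ (p - q) = φ p - φ q := by
    intro p q
    have : φ (p - q) + φ q = φ p := by rw [← hadd, sub_add_cancel]
    exact eq_sub_of_add_eq this
  have hwne : φ w ≠ 0 := by
    rw [hw, hsmul, hφsub]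
    exact mul_ne_zero (by norm_num) (sub_ne_zero.mpr (Ne.symm hx))
  clear_value w
  clear hw
  obtain ⟨u, hu⟩ : ∃ u : A, u = (1/2 : ℂ) • (w + star w) := ⟨_, rfl⟩
  obtain ⟨v, hv⟩ : ∃ v : A, v = (-Complex.I/2 : ℂ) • (w - star w) := ⟨_, rfl⟩
  have c1 : starRingEnd ℂ (1/2) = 1/2 := by
    simp [Complex.ext_iff]
  have c2 : starRingEnd ℂ (-Complex.I/2) = Complex.I/2 := by
    rw [map_div₀, map_neg, Complex.conj_I, neg_neg, Complex.conj_ofNat]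
  have humem : u ∈ StarAlgebra.adjoin ℂ (a '' s) := by
    rw [hu]; exact SMulMemClass.smul_mem _ (add_mem hwmem (star_mem hwmem))
  have hvmem : v ∈ StarAlgebra.adjoin ℂ (a '' s) := by
    rw [hv]; exact SMulMemClass.smul_mem _ (sub_mem hwmem (star_mem hwmem))
  have husa : star u = u := by
    rw [hu, star_smul, Complex.star_def, c1, star_add, star_star, add_comm]
  have hvsa : star v = v := by
    rw [hv, star_smul, Complex.star_def, c2, star_sub, star_star,
      show star w - w = -(w - star w) from (neg_sub _ _).symm, smul_neg, ← neg_smul, ← neg_div]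
  have hstarodd : Θ (star w) = -(star w) := by
    rw [map_star, hwodd, star_neg]
  have huodd : Θ u = -u := by
    rw [hu, map_smul, map_add, hwodd, hstarodd]
    module
  have hvodd : Θ v = -v := by
    rw [hv, map_smul, map_sub, hwodd, hstarodd]
    module
  have hdecomp : w = u + Complex.I • v := by
    rw [hu, hv, smul_smul,
      show Complex.I * (-Complex.I/2) = 1/2 from by
        linear_combination (-1/2 : ℂ) * Complex.I_mul_I]
    module
  have hφw : φ w = φ u + Complex.I * φ v := by
    rw [hdecomp, hadd, hsmul]
  by_cases hcase : φ u = 0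
  · refine ⟨v, hvmem, hvsa, hvodd, ?_⟩
    intro hv0
    rw [hφw, hcase, hv0] at hwne
    simp at hwne
  · exact ⟨u, humem, husa, huodd, hcase⟩

end Aux

/-- if `ω` is a product state extension of states `ω₁` on `A(I)` and `ω₂` on
`A(J)` (for disjoint `I`, `J`), then at least one of `ω₁`, `ω₂` is even, i.e. invariant
under the grading automorphism `Θ` on its subalgebra. -/
theorem product_state_marginal_even
    {A : Type*} [Ring A] [StarRing A] [Algebra ℂ A] [StarModule ℂ A]
    {ι : Type*} [DecidableEq ι] (a : ι → A) (hCAR : IsCAR a)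
    (Θ : A ≃⋆ₐ[ℂ] A) (hΘ : ∀ i, Θ (a i) = - a i)
    (I J : Set ι) (hdisj : Disjoint I J)
    (ω ω₁ ω₂ : A → ℂ) (hω : IsState ω) (hω₁ : IsState ω₁) (hω₂ : IsState ω₂)
    (hprod : ∀ x ∈ StarAlgebra.adjoin ℂ (a '' I), ∀ y ∈ StarAlgebra.adjoin ℂ (a '' J),
      ω (x * y) = ω₁ x * ω₂ y) :
    (∀ x ∈ StarAlgebra.adjoin ℂ (a '' I), ω₁ (Θ x) = ω₁ x) ∨
    (∀ y ∈ StarAlgebra.adjoin ℂ (a '' J), ω₂ (Θ y) = ω₂ y) := by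
  by_contra hcon
  push_neg at hcon
  obtain ⟨h1, h2⟩ := hcon
  obtain ⟨u, humem, husa, huodd, hune⟩ := aux_extract hω₁ hΘ h1
  obtain ⟨p, hpmem, hpsa, hpodd, hpne⟩ := aux_extract hω₂ hΘ h2
  have hanti : u * p = Θ p * u := aux_anticomm hCAR hΘ hdisj humem huodd hpmem
  rw [hpodd, neg_mul] at hanti
  have hskew : star (u * p) = -(u * p) := by
    rw [star_mul, husa, hpsa]
    rw [show p * u = -(u * p) from by rw [hanti, neg_neg]]
  have hre : (ω (u * p)).re = 0 := aux_state_re hω hskew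
  have hprodval := hprod u humem p hpmem
  have him1 : (ω₁ u).im = 0 := aux_state_im hω₁ husa
  have him2 : (ω₂ p).im = 0 := aux_state_im hω₂ hpsa
  rw [hprodval] at hre
  rw [Complex.mul_re, him1, him2] at hre
  have hr1 : (ω₁ u).re ≠ 0 := by
    intro h
    exact hune (Complex.ext h him1)
  have hr2 : (ω₂ p).re ≠ 0 := by
    intro h
    exact hpne (Complex.ext h him2)
  simp only [mul_zero, sub_zero] at hre
  exact mul_ne_zero hr1 hr2 hre
end

section
/- If ω is a separable state on A(I ∪ J) for the pair (A(I), A(J)), i.e. a convex combination ω = Σᵢ λᵢ ω₁ᵢ ∘ ω₂ᵢ of product states, then ω(A₋ B₋) = 0 for every odd A₋ ∈ A(I)₋ and every odd B₋ ∈ A(J)₋. In particular, any state with a nonvanishing fermion hopping correlation ω(a_i† a_j) ≠ 0 with i ∈ I, j ∈ J is non-separable. -/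
open scoped ComplexOrder

/-- Separability of a state `ω` for a pair of subsets `S`, `T` of the algebra: `ω` agrees on
products with a convex combination of product states. -/
def IsSeparableState {A : Type*} [Ring A] [StarRing A] [Algebra ℂ A]
    (ω : A → ℂ) (S T : Set A) : Prop :=
  ∃ (n : ℕ) (lam : Fin n → ℝ) (φ : Fin n → (A → ℂ)),
    (∀ i, 0 < lam i) ∧ (∑ i, lam i = 1) ∧
    (∀ i, IsState (φ i)) ∧
    (∀ i, ∀ x ∈ S, ∀ y ∈ T, φ i (x * y) = φ i x * φ i y) ∧
    (∀ x ∈ S, ∀ y ∈ T, ω (x * y) = ∑ i, (lam i : ℂ) * φ i (x * y))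


set_option linter.unusedSectionVars false

section Aux
variable {A : Type*} [Ring A] [StarRing A] [Algebra ℂ A] [StarModule ℂ A]
  {ι : Type*} [DecidableEq ι]

lemma theta_algebraMap (Θ : A ≃⋆ₐ[ℂ] A) (c : ℂ) : Θ (algebraMap ℂ A c) = algebraMap ℂ A c := by
  rw [Algebra.algebraMap_eq_smul_one, map_smul, map_one]

lemma theta_adjoin (Θ : A ≃⋆ₐ[ℂ] A) (a : ι → A) (hΘ : ∀ i, Θ (a i) = - a i) (K : Set ι) :
    ∀ y ∈ StarAlgebra.adjoin ℂ (a '' K),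
      Θ y ∈ StarAlgebra.adjoin ℂ (a '' K) ∧ Θ (Θ y) = y := by
  intro y hy
  induction hy using StarAlgebra.adjoin_induction with
  | mem z hz =>
    obtain ⟨j, hj, rfl⟩ := hz
    refine ⟨?_, by rw [hΘ, map_neg, hΘ, neg_neg]⟩
    rw [hΘ]
    exact neg_mem (StarAlgebra.subset_adjoin ℂ _ ⟨j, hj, rfl⟩)
  | algebraMap r =>
    rw [theta_algebraMap]
    exact ⟨algebraMap_mem _ r, theta_algebraMap Θ r⟩
  | add u v hu hv ihu ihv =>
    rw [map_add]
    exact ⟨add_mem ihu.1 ihv.1, by rw [map_add, ihu.2, ihv.2]⟩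
  | mul u v hu hv ihu ihv =>
    rw [map_mul]
    exact ⟨mul_mem ihu.1 ihv.1, by rw [map_mul, ihu.2, ihv.2]⟩
  | star u hu ihu =>
    rw [map_star]
    exact ⟨star_mem ihu.1, by rw [map_star, ihu.2]⟩

lemma gen_supercomm (a : ι → A) (hCAR : IsCAR a) (Θ : A ≃⋆ₐ[ℂ] A)
    (hΘ : ∀ i, Θ (a i) = - a i) {i : ι} (J : Set ι) (hi : ∀ j ∈ J, i ≠ j) :
    ∀ y ∈ StarAlgebra.adjoin ℂ (a '' J),
      (a i * y = Θ y * a i) ∧ (star (a i) * y = Θ y * star (a i)) ∧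
      (a i * Θ y = y * a i) ∧ (star (a i) * Θ y = y * star (a i)) := by
  obtain ⟨hc1, hc2, hc3⟩ := hCAR
  intro y hy
  induction hy using StarAlgebra.adjoin_induction with
  | mem z hz =>
    obtain ⟨j, hj, rfl⟩ := hz
    have hij : i ≠ j := hi j hj
    have e1 : a i * a j + a j * a i = 0 := hc3 i j
    have e2 : star (a i) * a j + a j * star (a i) = 0 := by
      have := hc1 i j; rwa [if_neg hij] at this
    rw [hΘ]
    have f1 : a i * a j = -(a j * a i) := eq_neg_of_add_eq_zero_left e1
    have f2 : star (a i) * a j = -(a j * star (a i)) := eq_neg_of_add_eq_zero_left e2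
    refine ⟨?_, ?_, ?_, ?_⟩
    · rw [neg_mul]; exact f1
    · rw [neg_mul]; exact f2
    · rw [mul_neg, f1, neg_neg]
    · rw [mul_neg, f2, neg_neg]
  | algebraMap r =>
    rw [theta_algebraMap]
    exact ⟨(Algebra.commutes r _).symm, (Algebra.commutes r _).symm,
      (Algebra.commutes r _).symm, (Algebra.commutes r _).symm⟩
  | add u v hu hv ihu ihv =>
    obtain ⟨u1, u2, u3, u4⟩ := ihu
    obtain ⟨v1, v2, v3, v4⟩ := ihv
    rw [map_add]
    refine ⟨?_, ?_, ?_, ?_⟩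
    · rw [mul_add, u1, v1, add_mul]
    · rw [mul_add, u2, v2, add_mul]
    · rw [mul_add, u3, v3, add_mul]
    · rw [mul_add, u4, v4, add_mul]
  | mul u v hu hv ihu ihv =>
    obtain ⟨u1, u2, u3, u4⟩ := ihu
    obtain ⟨v1, v2, v3, v4⟩ := ihv
    rw [map_mul]
    refine ⟨?_, ?_, ?_, ?_⟩
    · rw [← mul_assoc, u1, mul_assoc, v1, ← mul_assoc]
    · rw [← mul_assoc, u2, mul_assoc, v2, ← mul_assoc]
    · rw [← mul_assoc, u3, mul_assoc, v3, ← mul_assoc]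
    · rw [← mul_assoc, u4, mul_assoc, v4, ← mul_assoc]
  | star u hu ihu =>
    obtain ⟨u1, u2, u3, u4⟩ := ihu
    rw [map_star]
    have s1 := congrArg star u1
    have s2 := congrArg star u2
    have s3 := congrArg star u3
    have s4 := congrArg star u4
    simp only [star_mul, star_star] at s1 s2 s3 s4
    exact ⟨s4.symm, s3.symm, s2.symm, s1.symm⟩

lemma supercomm (a : ι → A) (hCAR : IsCAR a) (Θ : A ≃⋆ₐ[ℂ] A)
    (hΘ : ∀ i, Θ (a i) = - a i) (I J : Set ι) (hdisj : Disjoint I J) :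
    ∀ x ∈ StarAlgebra.adjoin ℂ (a '' I), ∀ y ∈ StarAlgebra.adjoin ℂ (a '' J),
      (x * (y + Θ y) = (y + Θ y) * x) ∧ (x * (y - Θ y) = (y - Θ y) * Θ x) ∧
      (Θ x * (y + Θ y) = (y + Θ y) * Θ x) ∧ (Θ x * (y - Θ y) = (y - Θ y) * x) := by
  intro x hx
  induction hx using StarAlgebra.adjoin_induction with
  | mem z hz =>
    obtain ⟨i, hiI, rfl⟩ := hz
    intro y hy
    have hi : ∀ j ∈ J, i ≠ j := by
      intro j hj h
      exact (Set.disjoint_left.mp hdisj hiI) (h ▸ hj)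
    obtain ⟨g1, g2, g3, g4⟩ := gen_supercomm a hCAR Θ hΘ J hi y hy
    rw [hΘ]
    refine ⟨?_, ?_, ?_, ?_⟩
    · rw [mul_add, g1, g3]; noncomm_ring
    · rw [mul_sub, g1, g3]; noncomm_ring
    · rw [neg_mul, mul_add, g1, g3]; noncomm_ring
    · rw [neg_mul, mul_sub, g1, g3]; noncomm_ring
  | algebraMap r =>
    intro y hy
    rw [theta_algebraMap]
    exact ⟨Algebra.commutes r _, Algebra.commutes r _,
      Algebra.commutes r _, Algebra.commutes r _⟩
  | add u v hu hv ihu ihv =>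
    intro y hy
    obtain ⟨u1, u2, u3, u4⟩ := ihu y hy
    obtain ⟨v1, v2, v3, v4⟩ := ihv y hy
    rw [map_add]
    refine ⟨?_, ?_, ?_, ?_⟩
    · rw [add_mul, u1, v1, mul_add]
    · rw [add_mul, u2, v2, mul_add]
    · rw [add_mul, u3, v3, mul_add]
    · rw [add_mul, u4, v4, mul_add]
  | mul u v hu hv ihu ihv =>
    intro y hy
    obtain ⟨u1, u2, u3, u4⟩ := ihu y hy
    obtain ⟨v1, v2, v3, v4⟩ := ihv y hy
    rw [map_mul]
    refine ⟨?_, ?_, ?_, ?_⟩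
    · rw [mul_assoc, v1, ← mul_assoc, u1, mul_assoc]
    · rw [mul_assoc, v2, ← mul_assoc, u2, mul_assoc]
    · rw [mul_assoc, v3, ← mul_assoc, u3, mul_assoc]
    · rw [mul_assoc, v4, ← mul_assoc, u4, mul_assoc]
  | star u hu ihu =>
    intro y hy
    obtain ⟨u1, u2, u3, u4⟩ := ihu (star y) (star_mem hy)
    rw [map_star] at u1 u2 u3 u4 ⊢
    rw [← star_add y (Θ y)] at u1 u3
    rw [← star_sub y (Θ y)] at u2 u4
    have s1 := congrArg star u1
    have s2 := congrArg star u2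
    have s3 := congrArg star u3
    have s4 := congrArg star u4
    simp only [star_mul, star_star] at s1 s2 s3 s4
    exact ⟨s1.symm, s4.symm, s3.symm, s2.symm⟩

lemma odd_anticomm (a : ι → A) (hCAR : IsCAR a) (Θ : A ≃⋆ₐ[ℂ] A)
    (hΘ : ∀ i, Θ (a i) = - a i) (I J : Set ι) (hdisj : Disjoint I J)
    {x y : A} (hx : x ∈ StarAlgebra.adjoin ℂ (a '' I)) (hxo : Θ x = -x)
    (hy : y ∈ StarAlgebra.adjoin ℂ (a '' J)) (hyo : Θ y = -y) :
    x * y = -(y * x) := by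
  have h := (supercomm a hCAR Θ hΘ I J hdisj x hx y hy).2.1
  rw [hxo, hyo, sub_neg_eq_add] at h
  have h2 : (2 : ℂ) • (x * y) = (2 : ℂ) • (-(y * x)) := by
    rw [two_smul, two_smul]
    calc x * y + x * y = x * (y + y) := by rw [mul_add]
    _ = (y + y) * -x := h
    _ = -(y * x) + -(y * x) := by noncomm_ring
  have := congrArg (fun z => (2 : ℂ)⁻¹ • z) h2
  simpa [smul_smul] using this

lemma isState_star {φ : A → ℂ} (hφ : IsState φ) (z : A) :
    φ (star z) = (starRingEnd ℂ) (φ z) := by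
  obtain ⟨hadd, hsmul, hone, hpos⟩ := hφ
  have him : ∀ w : A, (φ (star w * w)).im = 0 := by
    intro w
    have h := hpos w
    rw [Complex.le_def] at h
    simpa using h.2.symm
  have key1 : (φ (star z)).im + (φ z).im = 0 := by
    have e : star (z + 1) * (z + 1) = star z * z + (star z + (z + 1)) := by
      rw [star_add, star_one]; noncomm_ring
    have h := him (z + 1)
    rw [e, hadd, hadd, hadd, hone] at h
    simp only [Complex.add_im, Complex.one_im] at h
    have h0 := him z
    linarith
  have key2 : (φ (star z)).re - (φ z).re = 0 := by
    have e : star (z + Complex.I • (1 : A)) * (z + Complex.I • (1 : A)) =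
        star z * z + (Complex.I • star z + ((-Complex.I) • z + (1 : A))) := by
      rw [star_add, star_smul, star_one, Complex.star_def, Complex.conj_I]
      simp only [mul_add, add_mul, mul_smul_comm, smul_mul_assoc, one_mul, mul_one]
      match_scalars <;> ring_nf <;> norm_num [Complex.I_sq]
    have h := him (z + Complex.I • (1 : A))
    rw [e, hadd, hadd, hadd, hsmul, hsmul, hone] at h
    simp only [Complex.add_im, Complex.mul_im, Complex.one_im, Complex.I_re,
      Complex.I_im, Complex.neg_re, Complex.neg_im] at h
    have h0 := him z
    nlinarith [h, h0]
  apply Complex.ext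
  · simpa [Complex.conj_re] using by linarith
  · simpa [Complex.conj_im] using by linarith

lemma isState_neg {φ : A → ℂ} (hφ : IsState φ) (z : A) : φ (-z) = - φ z := by
  have := hφ.2.1 (-1) z
  simpa using this

lemma prod_state_vanish (a : ι → A) (hCAR : IsCAR a) (Θ : A ≃⋆ₐ[ℂ] A)
    (hΘ : ∀ i, Θ (a i) = - a i) (I J : Set ι) (hdisj : Disjoint I J)
    {φ : A → ℂ} (hφ : IsState φ)
    (hprod : ∀ x ∈ StarAlgebra.adjoin ℂ (a '' I), ∀ y ∈ StarAlgebra.adjoin ℂ (a '' J),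
      φ (x * y) = φ x * φ y)
    {x y : A} (hx : x ∈ StarAlgebra.adjoin ℂ (a '' I)) (hxo : Θ x = -x)
    (hy : y ∈ StarAlgebra.adjoin ℂ (a '' J)) (hyo : Θ y = -y) :
    φ (x * y) = 0 := by
  obtain ⟨hadd, hsmul, hone, hpos⟩ := hφ
  -- self-adjoint odd case
  have sa : ∀ u ∈ StarAlgebra.adjoin ℂ (a '' I), star u = u → Θ u = -u →
      ∀ v ∈ StarAlgebra.adjoin ℂ (a '' J), star v = v → Θ v = -v → φ u * φ v = 0 := by
    intro u hu hus huo v hv hvs hvo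
    have hpr := hprod u hu v hv
    have hanti : u * v = -(v * u) := odd_anticomm a hCAR Θ hΘ I J hdisj hu huo hv hvo
    have hvu : v * u = -(u * v) := by rw [hanti, neg_neg]
    have hre : (φ (u * v)).re = 0 := by
      have h1 : φ (star (u * v)) = (starRingEnd ℂ) (φ (u * v)) :=
        isState_star ⟨hadd, hsmul, hone, hpos⟩ _
      rw [star_mul, hus, hvs, hvu, isState_neg ⟨hadd, hsmul, hone, hpos⟩] at h1
      have := congrArg Complex.re h1
      simp only [Complex.neg_re, Complex.conj_re] at this
      linarith
    have huim : (φ u).im = 0 := by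
      have h1 : φ (star u) = (starRingEnd ℂ) (φ u) := isState_star ⟨hadd, hsmul, hone, hpos⟩ _
      rw [hus] at h1
      exact Complex.conj_eq_iff_im.mp h1.symm
    have hvim : (φ v).im = 0 := by
      have h1 : φ (star v) = (starRingEnd ℂ) (φ v) := isState_star ⟨hadd, hsmul, hone, hpos⟩ _
      rw [hvs] at h1
      exact Complex.conj_eq_iff_im.mp h1.symm
    apply Complex.ext
    · rw [← hpr]; exact hre
    · simp [Complex.mul_im, huim, hvim]
  -- decompose x and y into self-adjoint odd parts
  have decomp : ∀ (K : Set ι), ∀ w ∈ StarAlgebra.adjoin ℂ (a '' K), Θ w = -w →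
      ∃ w1 w2, w1 ∈ StarAlgebra.adjoin ℂ (a '' K) ∧ w2 ∈ StarAlgebra.adjoin ℂ (a '' K) ∧
        star w1 = w1 ∧ star w2 = w2 ∧ Θ w1 = -w1 ∧ Θ w2 = -w2 ∧
        w = w1 + Complex.I • w2 := by
    intro K w hw hwo
    refine ⟨(2⁻¹ : ℂ) • (w + star w), (Complex.I * 2⁻¹) • (star w - w), ?_, ?_, ?_, ?_, ?_, ?_, ?_⟩
    · exact SMulMemClass.smul_mem _ (add_mem hw (star_mem hw))
    · exact SMulMemClass.smul_mem _ (sub_mem (star_mem hw) hw)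
    · rw [star_smul, star_add, star_star, Complex.star_def]
      simp only [map_inv₀, Complex.conj_ofNat]
      rw [add_comm]
    · rw [star_smul, star_sub, star_star, Complex.star_def]
      simp only [map_mul, Complex.conj_I, map_inv₀, Complex.conj_ofNat]
      rw [neg_mul, neg_smul, ← smul_neg, neg_sub]
    · rw [map_smul, map_add, map_star, hwo, star_neg]
      module
    · rw [map_smul, map_sub, map_star, hwo, star_neg]
      module
    · match_scalars <;> ring_nf <;> norm_num [Complex.I_sq]
  obtain ⟨x1, x2, hx1m, hx2m, hx1s, hx2s, hx1o, hx2o, hxeq⟩ := decomp I x hx hxo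
  obtain ⟨y1, y2, hy1m, hy2m, hy1s, hy2s, hy1o, hy2o, hyeq⟩ := decomp J y hy hyo
  have hφx : φ x = φ x1 + Complex.I * φ x2 := by
    rw [hxeq, hadd, hsmul]
  have hφy : φ y = φ y1 + Complex.I * φ y2 := by
    rw [hyeq, hadd, hsmul]
  have h11 := sa x1 hx1m hx1s hx1o y1 hy1m hy1s hy1o
  have h12 := sa x1 hx1m hx1s hx1o y2 hy2m hy2s hy2o
  have h21 := sa x2 hx2m hx2s hx2o y1 hy1m hy1s hy1o
  have h22 := sa x2 hx2m hx2s hx2o y2 hy2m hy2s hy2o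
  rw [hprod x hx y hy, hφx, hφy]
  linear_combination h11 + Complex.I * h12 + Complex.I * h21 +
    Complex.I * Complex.I * h22
end Aux


/-- a separable state for the CAR pair `(A(I), A(J))` vanishes on products of
odd elements; in particular a state with nonvanishing fermion hopping correlation
`ω(aᵢ† aⱼ) ≠ 0` (`i ∈ I`, `j ∈ J`) is non-separable. -/
theorem separable_vanishes_on_odd_products
    {A : Type*} [Ring A] [StarRing A] [Algebra ℂ A] [StarModule ℂ A]
    {ι : Type*} [DecidableEq ι] (a : ι → A) (hCAR : IsCAR a)
    (Θ : A ≃⋆ₐ[ℂ] A) (hΘ : ∀ i, Θ (a i) = - a i)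
    (I J : Set ι) (hdisj : Disjoint I J)
    (ω : A → ℂ) (hω : IsState ω) :
    (IsSeparableState ω (StarAlgebra.adjoin ℂ (a '' I) : Set A) (StarAlgebra.adjoin ℂ (a '' J) : Set A) →
      ∀ x ∈ StarAlgebra.adjoin ℂ (a '' I), Θ x = - x →
      ∀ y ∈ StarAlgebra.adjoin ℂ (a '' J), Θ y = - y →
      ω (x * y) = 0) ∧
    (∀ i ∈ I, ∀ j ∈ J, ω (star (a i) * a j) ≠ 0 →
      ¬ IsSeparableState ω (StarAlgebra.adjoin ℂ (a '' I) : Set A) (StarAlgebra.adjoin ℂ (a '' J) : Set A)) := by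
  
  have main : IsSeparableState ω (StarAlgebra.adjoin ℂ (a '' I) : Set A)
      (StarAlgebra.adjoin ℂ (a '' J) : Set A) →
      ∀ x ∈ StarAlgebra.adjoin ℂ (a '' I), Θ x = - x →
      ∀ y ∈ StarAlgebra.adjoin ℂ (a '' J), Θ y = - y → ω (x * y) = 0 := by
    rintro ⟨n, lam, φ, hlam, hsum, hstate, hprodφ, hrep⟩ x hx hxo y hy hyo
    rw [hrep x hx y hy]
    apply Finset.sum_eq_zero
    intro i _
    have h0 : φ i (x * y) = 0 :=
      prod_state_vanish a hCAR Θ hΘ I J hdisj (hstate i)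
        (fun u hu v hv => hprodφ i u hu v hv) hx hxo hy hyo
    rw [h0, mul_zero]
  refine ⟨main, ?_⟩
  intro i hi j hj hne hsep
  exact hne (main hsep (star (a i))
    (star_mem (StarAlgebra.subset_adjoin ℂ _ ⟨i, hi, rfl⟩))
    (by rw [map_star, hΘ, star_neg]) (a j)
    (StarAlgebra.subset_adjoin ℂ _ ⟨j, hj, rfl⟩) (hΘ j))
end

section
/- Let I, J be disjoint finite sets and let A(I)' denote the commutant of A(I) in A(I∪J). If an even state ω on A(I∪J) is separable for the CAR pair (A(I), A(J)), then ω is separable for the tensor product pair (A(I), A(I)'), where A(I∪J) = A(I) ⊗ A(I)'. -/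
open scoped ComplexOrder

set_option linter.unusedSectionVars false

section Aux
variable {A : Type*} [Ring A] [StarRing A] [Algebra ℂ A] [StarModule ℂ A]
variable {ι : Type*} [DecidableEq ι]

private abbrev AK (a : ι → A) (s : Set ι) : StarSubalgebra ℂ A :=
  StarAlgebra.adjoin ℂ (a '' s)

private lemma half_eq {x y : A} (h : x + x = y + y) : x = y := by
  have h2 : (2:ℂ) • x = (2:ℂ) • y := by rw [two_smul, two_smul]; exact h
  have := congrArg (fun z => ((2:ℂ)⁻¹) • z) h2
  simpa [smul_smul] using this

private lemma double_zero {x : A} (h : x + x = 0) : x = 0 :=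
  half_eq (by rw [h, add_zero])

variable {a : ι → A} {Θ : A ≃⋆ₐ[ℂ] A}

/-- Θ preserves each local algebra. -/
private lemma thetaMem (hΘ : ∀ i, Θ (a i) = - a i) {s : Set ι} {x : A}
    (hx : x ∈ AK a s) : Θ x ∈ AK a s := by
  induction hx using StarAlgebra.adjoin_induction with
  | mem y hy =>
    obtain ⟨k, hk, rfl⟩ := hy
    rw [hΘ k]
    exact neg_mem (StarAlgebra.subset_adjoin ℂ _ ⟨k, hk, rfl⟩)
  | algebraMap r => rw [AlgHomClass.commutes]; exact algebraMap_mem _ r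
  | add x y hx hy ihx ihy => rw [map_add]; exact add_mem ihx ihy
  | mul x y hx hy ihx ihy => rw [map_mul]; exact mul_mem ihx ihy
  | star x hx ih => rw [map_star]; exact star_mem ih

/-- Θ is an involution on each local algebra. -/
private lemma theta2 (hΘ : ∀ i, Θ (a i) = - a i) {s : Set ι} {x : A}
    (hx : x ∈ AK a s) : Θ (Θ x) = x := by
  induction hx using StarAlgebra.adjoin_induction with
  | mem y hy =>
    obtain ⟨k, hk, rfl⟩ := hy
    rw [hΘ k, map_neg, hΘ k, neg_neg]
  | algebraMap r => rw [AlgHomClass.commutes, AlgHomClass.commutes]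
  | add x y hx hy ihx ihy => rw [map_add, map_add, ihx, ihy]
  | mul x y hx hy ihx ihy => rw [map_mul, map_mul, ihx, ihy]
  | star x hx ih => rw [map_star, map_star, ih]

/-- Basic graded commutation with a single generator. -/
private lemma qlem (hCAR : IsCAR a) (hΘ : ∀ i, Θ (a i) = - a i) {s : Set ι} {i : ι}
    (hi : i ∉ s) {w : A} (hw : w ∈ AK a s) :
    w * a i = a i * Θ w ∧ w * star (a i) = star (a i) * Θ w := by
  induction hw using StarAlgebra.adjoin_induction with
  | mem y hy =>
    obtain ⟨k, hk, rfl⟩ := hy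
    have hki : i ≠ k := fun h => hi (h ▸ hk)
    constructor
    · have := hCAR.2.2 i k
      rw [hΘ k, mul_neg]
      exact eq_neg_of_add_eq_zero_left (by rwa [add_comm] at this)
    · have h1 := hCAR.1 i k
      rw [if_neg hki] at h1
      rw [hΘ k, mul_neg]
      exact eq_neg_of_add_eq_zero_left (by rwa [add_comm] at h1)
  | algebraMap r =>
    rw [AlgHomClass.commutes]
    constructor <;> rw [← Algebra.commutes]
  | add x y hx hy ihx ihy =>
    constructor
    · rw [add_mul, ihx.1, ihy.1, map_add, mul_add]
    · rw [add_mul, ihx.2, ihy.2, map_add, mul_add]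
  | mul x y hx hy ihx ihy =>
    constructor
    · rw [mul_assoc, ihy.1, ← mul_assoc, ihx.1, map_mul, mul_assoc]
    · rw [mul_assoc, ihy.2, ← mul_assoc, ihx.2, map_mul, mul_assoc]
  | star x hx ih =>
    have hx2 : Θ (Θ x) = x := theta2 hΘ hx
    constructor
    · have h := congrArg star ih.2
      simp only [star_mul, star_star] at h
      have h2 := congrArg Θ h
      simp only [map_mul, hΘ i] at h2
      rw [map_star Θ (Θ x), hx2] at h2
      simp only [neg_mul, mul_neg, neg_inj] at h2
      exact h2.symm
    · have h := congrArg star ih.1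
      simp only [star_mul] at h
      have h2 := congrArg Θ h
      simp only [map_mul] at h2
      rw [map_star Θ (a i), hΘ i, map_star Θ (Θ x), hx2] at h2
      simp only [star_neg, neg_mul, mul_neg, neg_inj] at h2
      exact h2.symm

/-- Graded commutation (supercommutation) between disjoint local algebras:
`2 w x = (x + Θx) w + (x - Θx) Θw`. -/
private lemma sc (hCAR : IsCAR a) (hΘ : ∀ i, Θ (a i) = - a i) {s t : Set ι}
    (hst : ∀ i ∈ s, i ∉ t) {x : A} (hx : x ∈ AK a s) :
    ∀ w ∈ AK a t, w * x + w * x = (x + Θ x) * w + (x - Θ x) * Θ w := by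
  induction hx using StarAlgebra.adjoin_induction with
  | mem y hy =>
    obtain ⟨k, hk, rfl⟩ := hy
    intro w hw
    rw [(qlem hCAR hΘ (hst k hk) hw).1, hΘ k]
    noncomm_ring
  | algebraMap r =>
    intro w hw
    rw [AlgHomClass.commutes, ← Algebra.commutes]
    noncomm_ring
  | add x y hx hy ihx ihy =>
    intro w hw
    have h1 := ihx w hw
    have h2 := ihy w hw
    have e : w * (x + y) + w * (x + y) = (w * x + w * x) + (w * y + w * y) := by noncomm_ring
    rw [map_add, e, h1, h2]
    noncomm_ring
  | mul x y hx hy ihx ihy =>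
    intro w hw
    have hw' := thetaMem hΘ hw
    have hww : Θ (Θ w) = w := theta2 hΘ hw
    have h1 := ihx w hw
    have h2 := ihy w hw
    have h2' := ihy (Θ w) hw'
    rw [hww] at h2'
    refine half_eq ?_
    have e : (w * (x * y) + w * (x * y)) + (w * (x * y) + w * (x * y))
        = ((w * x + w * x) * y) + ((w * x + w * x) * y) := by noncomm_ring
    rw [e, h1]
    have e2 : ((x + Θ x) * w + (x - Θ x) * Θ w) * y + ((x + Θ x) * w + (x - Θ x) * Θ w) * y
        = (x + Θ x) * (w * y + w * y) + (x - Θ x) * (Θ w * y + Θ w * y) := by noncomm_ring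
    rw [e2, h2, h2', map_mul]
    noncomm_ring
  | star x hx ih =>
    intro w hw
    have hws := star_mem hw
    have hww : Θ (Θ w) = w := theta2 hΘ hw
    have hx2 : Θ (Θ x) = x := theta2 hΘ hx
    have h1 := ih (star w) hws
    have h2 := ih (Θ (star w)) (thetaMem hΘ hws)
    rw [theta2 hΘ hws] at h2
    have hiii : (star w + Θ (star w)) * x + (star w + Θ (star w)) * x
        = x * (star w + Θ (star w)) + x * (star w + Θ (star w)) := by
      have e : (star w + Θ (star w)) * x + (star w + Θ (star w)) * x
          = (star w * x + star w * x) + (Θ (star w) * x + Θ (star w) * x) := by noncomm_ring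
      rw [e, h1, h2]; noncomm_ring
    have hiv : (star w - Θ (star w)) * x + (star w - Θ (star w)) * x
        = Θ x * (star w - Θ (star w)) + Θ x * (star w - Θ (star w)) := by
      have e : (star w - Θ (star w)) * x + (star w - Θ (star w)) * x
          = (star w * x + star w * x) - (Θ (star w) * x + Θ (star w) * x) := by noncomm_ring
      rw [e, h1, h2]; noncomm_ring
    have hv := congrArg star hiii
    have hvi := congrArg star hiv
    simp only [star_add, star_sub, star_mul, star_star, map_star Θ w] at hv hvi
    -- hv : star x * (w + Θ w) + star x * (w + Θ w) = (w + Θ w) * star x + (w + Θ w) * star x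
    -- hvi : star x * (w - Θ w) + star x * (w - Θ w)
    --        = (w - Θ w) * star (Θ x) + (w - Θ w) * star (Θ x)
    have hvii := congrArg Θ hvi
    simp only [map_add, map_sub, map_mul, map_star Θ x, map_star Θ (Θ x), hww, hx2] at hvii
    -- hvii : star (Θ x) * (Θ w - w) + ... = (Θ w - w) * star x + ...
    rw [map_star Θ x]
    refine half_eq ?_
    have e : (w * star x + w * star x) + (w * star x + w * star x)
        = ((w + Θ w) * star x + (w + Θ w) * star x)
          + ((w - Θ w) * star x + (w - Θ w) * star x) := by noncomm_ring
    rw [e, ← hv]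
    have e2 : (w - Θ w) * star x + (w - Θ w) * star x
        = -((Θ w - w) * star x + (Θ w - w) * star x) := by noncomm_ring
    rw [e2, ← hvii]
    noncomm_ring

private def carV (a : ι → A) (i : ι) : A := star (a i) * a i - a i * star (a i)
private def carU3 (a : ι → A) (i : ι) : A := a i + star (a i)
private def carU4 (a : ι → A) (i : ι) : A := a i - star (a i)
/-- single-site conditional expectation onto the relative commutant -/
private noncomputable def carE (a : ι → A) (i : ι) (z : A) : A :=
  (4:ℂ)⁻¹ • (z + carV a i * z * carV a i + carU3 a i * z * carU3 a i
    - carU4 a i * z * carU4 a i)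

section Site
variable (hCAR : IsCAR a) (i : ι)
include hCAR

private lemma hbb1 : star (a i) * a i + a i * star (a i) = 1 := by
  have := hCAR.1 i i; simpa using this

private lemma hb0 : a i * a i = 0 := double_zero (hCAR.2.2 i i)

private lemma hs0 : star (a i) * star (a i) = 0 := double_zero (hCAR.2.1 i i)

private lemma bsb : a i * star (a i) * a i = a i := by
  have h : a i * star (a i) = 1 - star (a i) * a i := by
    rw [← hbb1 hCAR i]; noncomm_ring
  calc a i * star (a i) * a i = (1 - star (a i) * a i) * a i := by rw [h]
    _ = a i - star (a i) * (a i * a i) := by noncomm_ring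
    _ = a i := by rw [hb0 hCAR i]; noncomm_ring

private lemma sbs : star (a i) * a i * star (a i) = star (a i) := by
  have h : star (a i) * a i = 1 - a i * star (a i) := by
    rw [← hbb1 hCAR i]; noncomm_ring
  calc star (a i) * a i * star (a i) = (1 - a i * star (a i)) * star (a i) := by rw [h]
    _ = star (a i) - a i * (star (a i) * star (a i)) := by noncomm_ring
    _ = star (a i) := by rw [hs0 hCAR i]; noncomm_ring

private lemma v_mul_v : carV a i * carV a i = 1 := by
  have e : carV a i * carV a i
      = star (a i) * a i * star (a i) * a i - star (a i) * (a i * a i) * star (a i)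
        - a i * (star (a i) * star (a i)) * a i + a i * star (a i) * a i * star (a i) := by
    simp only [carV]; noncomm_ring
  rw [e, sbs hCAR i, hb0 hCAR i, hs0 hCAR i, bsb hCAR i, ← hbb1 hCAR i]
  noncomm_ring

private lemma v_mul_b : carV a i * a i = - a i := by
  have e : carV a i * a i = star (a i) * (a i * a i) - a i * star (a i) * a i := by
    simp only [carV]; noncomm_ring
  rw [e, hb0 hCAR i, bsb hCAR i]; noncomm_ring

private lemma b_mul_v : a i * carV a i = a i := by
  have e : a i * carV a i = a i * star (a i) * a i - (a i * a i) * star (a i) := by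
    simp only [carV]; noncomm_ring
  rw [e, hb0 hCAR i, bsb hCAR i]; noncomm_ring

private lemma v_mul_s : carV a i * star (a i) = star (a i) := by
  have e : carV a i * star (a i)
      = star (a i) * a i * star (a i) - a i * (star (a i) * star (a i)) := by
    simp only [carV]; noncomm_ring
  rw [e, hs0 hCAR i, sbs hCAR i]; noncomm_ring

private lemma s_mul_v : star (a i) * carV a i = - star (a i) := by
  have e : star (a i) * carV a i
      = star (a i) * star (a i) * a i - star (a i) * a i * star (a i) := by
    simp only [carV]; noncomm_ring
  rw [e, hs0 hCAR i, sbs hCAR i]; noncomm_ring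

private lemma u3_sq : carU3 a i * carU3 a i = 1 := by
  have e : carU3 a i * carU3 a i
      = a i * a i + (star (a i) * a i + a i * star (a i)) + star (a i) * star (a i) := by
    simp only [carU3]; noncomm_ring
  rw [e, hb0 hCAR i, hs0 hCAR i, hbb1 hCAR i]; simp

private lemma u4_sq : carU4 a i * carU4 a i = -1 := by
  have e : carU4 a i * carU4 a i
      = a i * a i - (star (a i) * a i + a i * star (a i)) + star (a i) * star (a i) := by
    simp only [carU4]; noncomm_ring
  rw [e, hb0 hCAR i, hs0 hCAR i, hbb1 hCAR i]; noncomm_ring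

private lemma u3_b_u3 : carU3 a i * a i * carU3 a i = star (a i) := by
  have e : carU3 a i * a i * carU3 a i
      = (a i * a i) * a i + (a i * a i) * star (a i) + star (a i) * (a i * a i)
        + star (a i) * a i * star (a i) := by
    simp only [carU3]; noncomm_ring
  rw [e, hb0 hCAR i, sbs hCAR i]; noncomm_ring

private lemma u3_s_u3 : carU3 a i * star (a i) * carU3 a i = a i := by
  have e : carU3 a i * star (a i) * carU3 a i
      = a i * star (a i) * a i + a i * (star (a i) * star (a i))
        + (star (a i) * star (a i)) * a i + (star (a i) * star (a i)) * star (a i) := by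
    simp only [carU3]; noncomm_ring
  rw [e, hs0 hCAR i, bsb hCAR i]; noncomm_ring

private lemma u4_b_u4 : carU4 a i * a i * carU4 a i = star (a i) := by
  have e : carU4 a i * a i * carU4 a i
      = (a i * a i) * a i - (a i * a i) * star (a i) - star (a i) * (a i * a i)
        + star (a i) * a i * star (a i) := by
    simp only [carU4]; noncomm_ring
  rw [e, hb0 hCAR i, sbs hCAR i]; noncomm_ring

private lemma u4_s_u4 : carU4 a i * star (a i) * carU4 a i = a i := by
  have e : carU4 a i * star (a i) * carU4 a i
      = a i * star (a i) * a i - a i * (star (a i) * star (a i))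
        - (star (a i) * star (a i)) * a i + (star (a i) * star (a i)) * star (a i) := by
    simp only [carU4]; noncomm_ring
  rw [e, hs0 hCAR i, bsb hCAR i]; noncomm_ring

private lemma u3_v_u3 : carU3 a i * carV a i * carU3 a i = - carV a i := by
  have h : carU3 a i * carV a i = a i - star (a i) := by
    have e : carU3 a i * carV a i = a i * carV a i + star (a i) * carV a i := by
      simp only [carU3]; noncomm_ring
    rw [e, b_mul_v hCAR i, s_mul_v hCAR i]; noncomm_ring
  rw [h]
  have e2 : (a i - star (a i)) * carU3 a i
      = a i * a i + a i * star (a i) - star (a i) * a i - star (a i) * star (a i) := by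
    simp only [carU3]; noncomm_ring
  rw [e2, hb0 hCAR i, hs0 hCAR i]
  simp only [carV]; noncomm_ring

private lemma u4_v_u4 : carU4 a i * carV a i * carU4 a i = carV a i := by
  have h : carU4 a i * carV a i = a i + star (a i) := by
    have e : carU4 a i * carV a i = a i * carV a i - star (a i) * carV a i := by
      simp only [carU4]; noncomm_ring
    rw [e, b_mul_v hCAR i, s_mul_v hCAR i]; noncomm_ring
  rw [h]
  have e2 : (a i + star (a i)) * carU4 a i
      = a i * a i - a i * star (a i) + star (a i) * a i - star (a i) * star (a i) := by
    simp only [carU4]; noncomm_ring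
  rw [e2, hb0 hCAR i, hs0 hCAR i]
  simp only [carV]; noncomm_ring

private lemma v_star : star (carV a i) = carV a i := by
  simp only [carV, star_sub, star_mul, star_star]

private lemma v_theta (hΘ : ∀ i, Θ (a i) = - a i) : Θ (carV a i) = carV a i := by
  have h1 : Θ (star (a i)) = - star (a i) := by rw [map_star Θ (a i), hΘ i, star_neg]
  simp only [carV, map_sub, map_mul, hΘ i, h1]
  noncomm_ring

private lemma v_mem {s : Set ι} (hi : i ∈ s) : carV a i ∈ AK a s := by
  have hb : a i ∈ AK a s := StarAlgebra.subset_adjoin ℂ _ ⟨i, hi, rfl⟩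
  exact sub_mem (mul_mem (star_mem hb) hb) (mul_mem hb (star_mem hb))

end Site

section Expect
variable (hCAR : IsCAR a) (hΘ : ∀ i, Θ (a i) = - a i) {i : ι} {t : Set ι} (hi : i ∉ t)
  {w : A} (hw : w ∈ AK a t)
include hCAR hΘ hi hw

private lemma w_v : w * carV a i = carV a i * w := by
  have q := qlem hCAR hΘ hi hw
  have qt := qlem hCAR hΘ hi (thetaMem hΘ hw)
  rw [theta2 hΘ hw] at qt
  have e : w * carV a i = (w * star (a i)) * a i - (w * a i) * star (a i) := by
    simp only [carV]; noncomm_ring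
  rw [e, q.1, q.2]
  have e2 : star (a i) * Θ w * a i - a i * Θ w * star (a i)
      = star (a i) * (Θ w * a i) - a i * (Θ w * star (a i)) := by noncomm_ring
  rw [e2, qt.1, qt.2]
  simp only [carV]; noncomm_ring

private lemma w_u3 : w * carU3 a i = carU3 a i * Θ w := by
  have q := qlem hCAR hΘ hi hw
  simp only [carU3, mul_add, add_mul, q.1, q.2]

private lemma u3_w : carU3 a i * w = Θ w * carU3 a i := by
  have h := w_u3 hCAR hΘ hi (thetaMem hΘ hw)
  rw [theta2 hΘ hw] at h
  exact h.symm

private lemma w_u4 : w * carU4 a i = carU4 a i * Θ w := by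
  have q := qlem hCAR hΘ hi hw
  simp only [carU4, mul_sub, sub_mul, q.1, q.2]

private lemma u4_w : carU4 a i * w = Θ w * carU4 a i := by
  have h := w_u4 hCAR hΘ hi (thetaMem hΘ hw)
  rw [theta2 hΘ hw] at h
  exact h.symm

private lemma e_w : carE a i w = (2:ℂ)⁻¹ • (w + Θ w) := by
  have c1 : carV a i * w * carV a i = w := by
    rw [← w_v hCAR hΘ hi hw, mul_assoc, v_mul_v hCAR i, mul_one]
  have c2 : carU3 a i * w * carU3 a i = Θ w := by
    rw [u3_w hCAR hΘ hi hw, mul_assoc, u3_sq hCAR i, mul_one]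
  have c3 : carU4 a i * w * carU4 a i = - Θ w := by
    rw [u4_w hCAR hΘ hi hw, mul_assoc, u4_sq hCAR i, mul_neg_one]
  rw [carE, c1, c2, c3]
  module

private lemma e_bw : carE a i (a i * w) = 0 := by
  have c1 : carV a i * (a i * w) * carV a i = -(a i * w) := by
    calc carV a i * (a i * w) * carV a i = (carV a i * a i) * (w * carV a i) := by
          noncomm_ring
      _ = (- a i) * (carV a i * w) := by rw [v_mul_b hCAR i, w_v hCAR hΘ hi hw]
      _ = -((a i * carV a i) * w) := by noncomm_ring
      _ = -(a i * w) := by rw [b_mul_v hCAR i]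
  have c2 : carU3 a i * (a i * w) * carU3 a i = star (a i) * Θ w := by
    calc carU3 a i * (a i * w) * carU3 a i = (carU3 a i * a i) * (w * carU3 a i) := by
          noncomm_ring
      _ = (carU3 a i * a i) * (carU3 a i * Θ w) := by rw [w_u3 hCAR hΘ hi hw]
      _ = (carU3 a i * a i * carU3 a i) * Θ w := by noncomm_ring
      _ = star (a i) * Θ w := by rw [u3_b_u3 hCAR i]
  have c3 : carU4 a i * (a i * w) * carU4 a i = star (a i) * Θ w := by
    calc carU4 a i * (a i * w) * carU4 a i = (carU4 a i * a i) * (w * carU4 a i) := by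
          noncomm_ring
      _ = (carU4 a i * a i) * (carU4 a i * Θ w) := by rw [w_u4 hCAR hΘ hi hw]
      _ = (carU4 a i * a i * carU4 a i) * Θ w := by noncomm_ring
      _ = star (a i) * Θ w := by rw [u4_b_u4 hCAR i]
  rw [carE, c1, c2, c3]
  module

private lemma e_sw : carE a i (star (a i) * w) = 0 := by
  have c1 : carV a i * (star (a i) * w) * carV a i = -(star (a i) * w) := by
    calc carV a i * (star (a i) * w) * carV a i
        = (carV a i * star (a i)) * (w * carV a i) := by noncomm_ring
      _ = star (a i) * (carV a i * w) := by rw [v_mul_s hCAR i, w_v hCAR hΘ hi hw]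
      _ = (star (a i) * carV a i) * w := by noncomm_ring
      _ = -(star (a i) * w) := by rw [s_mul_v hCAR i]; noncomm_ring
  have c2 : carU3 a i * (star (a i) * w) * carU3 a i = a i * Θ w := by
    calc carU3 a i * (star (a i) * w) * carU3 a i
        = (carU3 a i * star (a i)) * (w * carU3 a i) := by noncomm_ring
      _ = (carU3 a i * star (a i)) * (carU3 a i * Θ w) := by rw [w_u3 hCAR hΘ hi hw]
      _ = (carU3 a i * star (a i) * carU3 a i) * Θ w := by noncomm_ring
      _ = a i * Θ w := by rw [u3_s_u3 hCAR i]
  have c3 : carU4 a i * (star (a i) * w) * carU4 a i = a i * Θ w := by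
    calc carU4 a i * (star (a i) * w) * carU4 a i
        = (carU4 a i * star (a i)) * (w * carU4 a i) := by noncomm_ring
      _ = (carU4 a i * star (a i)) * (carU4 a i * Θ w) := by rw [w_u4 hCAR hΘ hi hw]
      _ = (carU4 a i * star (a i) * carU4 a i) * Θ w := by noncomm_ring
      _ = a i * Θ w := by rw [u4_s_u4 hCAR i]
  rw [carE, c1, c2, c3]
  module

private lemma e_vw : carE a i (carV a i * w) = carV a i * ((2:ℂ)⁻¹ • (w - Θ w)) := by
  have c1 : carV a i * (carV a i * w) * carV a i = carV a i * w := by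
    calc carV a i * (carV a i * w) * carV a i
        = (carV a i * carV a i) * (w * carV a i) := by noncomm_ring
      _ = (carV a i * carV a i) * (carV a i * w) := by rw [w_v hCAR hΘ hi hw]
      _ = carV a i * w := by rw [v_mul_v hCAR i, one_mul]
  have c2 : carU3 a i * (carV a i * w) * carU3 a i = -(carV a i * Θ w) := by
    calc carU3 a i * (carV a i * w) * carU3 a i
        = (carU3 a i * carV a i) * (w * carU3 a i) := by noncomm_ring
      _ = (carU3 a i * carV a i) * (carU3 a i * Θ w) := by rw [w_u3 hCAR hΘ hi hw]
      _ = (carU3 a i * carV a i * carU3 a i) * Θ w := by noncomm_ring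
      _ = -(carV a i * Θ w) := by rw [u3_v_u3 hCAR i]; noncomm_ring
  have c3 : carU4 a i * (carV a i * w) * carU4 a i = carV a i * Θ w := by
    calc carU4 a i * (carV a i * w) * carU4 a i
        = (carU4 a i * carV a i) * (w * carU4 a i) := by noncomm_ring
      _ = (carU4 a i * carV a i) * (carU4 a i * Θ w) := by rw [w_u4 hCAR hΘ hi hw]
      _ = (carU4 a i * carV a i * carU4 a i) * Θ w := by noncomm_ring
      _ = carV a i * Θ w := by rw [u4_v_u4 hCAR i]
  rw [carE, c1, c2, c3, mul_smul_comm, mul_sub]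
  module

end Expect

private lemma e_add (i : ι) (z₁ z₂ : A) : carE a i (z₁ + z₂) = carE a i z₁ + carE a i z₂ := by
  rw [carE, carE, carE, ← smul_add]
  congr 1
  noncomm_ring

private lemma e_fix (hCAR : IsCAR a) (i : ι) {z : A}
    (hz1 : z * a i = a i * z) (hz2 : z * star (a i) = star (a i) * z) : carE a i z = z := by
  have hv : z * carV a i = carV a i * z := by
    have e : z * carV a i = (z * star (a i)) * a i - (z * a i) * star (a i) := by
      simp only [carV]; noncomm_ring
    rw [e, hz1, hz2]
    have e2 : star (a i) * z * a i - a i * z * star (a i)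
        = star (a i) * (z * a i) - a i * (z * star (a i)) := by noncomm_ring
    rw [e2, hz1, hz2]
    simp only [carV]; noncomm_ring
  have h3 : z * carU3 a i = carU3 a i * z := by
    simp only [carU3, mul_add, add_mul, hz1, hz2]
  have h4 : z * carU4 a i = carU4 a i * z := by
    simp only [carU4, mul_sub, sub_mul, hz1, hz2]
  have c1 : carV a i * z * carV a i = z := by
    rw [← hv, mul_assoc, v_mul_v hCAR i, mul_one]
  have c2 : carU3 a i * z * carU3 a i = z := by
    rw [← h3, mul_assoc, u3_sq hCAR i, mul_one]
  have c3 : carU4 a i * z * carU4 a i = -z := by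
    rw [← h4, mul_assoc, u4_sq hCAR i, mul_neg_one]
  rw [carE, c1, c2, c3]
  module

/-- decomposition of an element over the site `i` with coefficients in `A(t)` -/
private def Sp4 (a : ι → A) (i : ι) (t : Set ι) (z : A) : Prop :=
  ∃ w₁ w₂ w₃ w₄, w₁ ∈ AK a t ∧ w₂ ∈ AK a t ∧ w₃ ∈ AK a t ∧ w₄ ∈ AK a t ∧
    z = w₁ + a i * w₂ + star (a i) * w₃ + carV a i * w₄

section Span
variable (hCAR : IsCAR a) (hΘ : ∀ i, Θ (a i) = - a i) {i : ι} {t : Set ι} (hi : i ∉ t)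

private lemma sp4_add {z₁ z₂ : A} (h₁ : Sp4 a i t z₁) (h₂ : Sp4 a i t z₂) :
    Sp4 a i t (z₁ + z₂) := by
  obtain ⟨w₁, w₂, w₃, w₄, m₁, m₂, m₃, m₄, rfl⟩ := h₁
  obtain ⟨u₁, u₂, u₃, u₄, n₁, n₂, n₃, n₄, rfl⟩ := h₂
  exact ⟨w₁ + u₁, w₂ + u₂, w₃ + u₃, w₄ + u₄, add_mem m₁ n₁, add_mem m₂ n₂,
    add_mem m₃ n₃, add_mem m₄ n₄, by noncomm_ring⟩

include hCAR in
private lemma sb_eq (i : ι) : star (a i) * a i = (2:ℂ)⁻¹ • (1 + carV a i) := by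
  refine half_eq ?_
  have h1 : star (a i) * a i + star (a i) * a i = 1 + carV a i := by
    rw [← hbb1 hCAR i]; simp only [carV]; noncomm_ring
  rw [h1]; module

include hCAR in
private lemma bs_eq (i : ι) : a i * star (a i) = (2:ℂ)⁻¹ • (1 - carV a i) := by
  refine half_eq ?_
  have h1 : a i * star (a i) + a i * star (a i) = 1 - carV a i := by
    rw [← hbb1 hCAR i]; simp only [carV]; noncomm_ring
  rw [h1]; module

include hCAR hΘ hi

private lemma sp4_mul_w {z : A} (h : Sp4 a i t z) {w : A} (hw : w ∈ AK a t) :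
    Sp4 a i t (z * w) := by
  obtain ⟨w₁, w₂, w₃, w₄, m₁, m₂, m₃, m₄, rfl⟩ := h
  exact ⟨w₁ * w, w₂ * w, w₃ * w, w₄ * w, mul_mem m₁ hw, mul_mem m₂ hw,
    mul_mem m₃ hw, mul_mem m₄ hw, by noncomm_ring⟩

private lemma sp4_mul_b {z : A} (h : Sp4 a i t z) : Sp4 a i t (z * a i) := by
  obtain ⟨w₁, w₂, w₃, w₄, m₁, m₂, m₃, m₄, rfl⟩ := h
  have q₁ := (qlem hCAR hΘ hi m₁).1
  have q₂ := (qlem hCAR hΘ hi m₂).1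
  have q₃ := (qlem hCAR hΘ hi m₃).1
  have q₄ := (qlem hCAR hΘ hi m₄).1
  refine ⟨(2:ℂ)⁻¹ • Θ w₃, Θ w₁ - Θ w₄, 0, (2:ℂ)⁻¹ • Θ w₃,
    SMulMemClass.smul_mem _ (thetaMem hΘ m₃), sub_mem (thetaMem hΘ m₁) (thetaMem hΘ m₄),
    zero_mem _, SMulMemClass.smul_mem _ (thetaMem hΘ m₃), ?_⟩
  have key : (w₁ + a i * w₂ + star (a i) * w₃ + carV a i * w₄) * a i
      = a i * Θ w₁ + (a i * a i) * Θ w₂ + (star (a i) * a i) * Θ w₃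
        + (carV a i * a i) * Θ w₄ := by
    have e : (w₁ + a i * w₂ + star (a i) * w₃ + carV a i * w₄) * a i
        = w₁ * a i + a i * (w₂ * a i) + star (a i) * (w₃ * a i)
          + carV a i * (w₄ * a i) := by noncomm_ring
    rw [e, q₁, q₂, q₃, q₄]; noncomm_ring
  rw [key, hb0 hCAR i, sb_eq hCAR i, v_mul_b hCAR i]
  simp only [zero_mul, mul_zero, smul_mul_assoc, sub_mul, add_mul, one_mul, mul_add,
    mul_sub, neg_mul, mul_neg, mul_smul_comm, smul_add, smul_sub]
  module

private lemma sp4_mul_s {z : A} (h : Sp4 a i t z) : Sp4 a i t (z * star (a i)) := by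
  obtain ⟨w₁, w₂, w₃, w₄, m₁, m₂, m₃, m₄, rfl⟩ := h
  have q₁ := (qlem hCAR hΘ hi m₁).2
  have q₂ := (qlem hCAR hΘ hi m₂).2
  have q₃ := (qlem hCAR hΘ hi m₃).2
  have q₄ := (qlem hCAR hΘ hi m₄).2
  refine ⟨(2:ℂ)⁻¹ • Θ w₂, 0, Θ w₁ + Θ w₄, -((2:ℂ)⁻¹ • Θ w₂),
    SMulMemClass.smul_mem _ (thetaMem hΘ m₂), zero_mem _,
    add_mem (thetaMem hΘ m₁) (thetaMem hΘ m₄),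
    neg_mem (SMulMemClass.smul_mem _ (thetaMem hΘ m₂)), ?_⟩
  have key : (w₁ + a i * w₂ + star (a i) * w₃ + carV a i * w₄) * star (a i)
      = star (a i) * Θ w₁ + (a i * star (a i)) * Θ w₂
        + (star (a i) * star (a i)) * Θ w₃ + (carV a i * star (a i)) * Θ w₄ := by
    have e : (w₁ + a i * w₂ + star (a i) * w₃ + carV a i * w₄) * star (a i)
        = w₁ * star (a i) + a i * (w₂ * star (a i)) + star (a i) * (w₃ * star (a i))
          + carV a i * (w₄ * star (a i)) := by noncomm_ring
    rw [e, q₁, q₂, q₃, q₄]; noncomm_ring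
  rw [key, hs0 hCAR i, bs_eq hCAR i, v_mul_s hCAR i]
  simp only [zero_mul, mul_zero, smul_mul_assoc, sub_mul, add_mul, one_mul, mul_add,
    mul_sub, neg_mul, mul_neg, mul_smul_comm, smul_add, smul_sub]
  module

private lemma sp4_mul_v {z : A} (h : Sp4 a i t z) : Sp4 a i t (z * carV a i) := by
  obtain ⟨w₁, w₂, w₃, w₄, m₁, m₂, m₃, m₄, rfl⟩ := h
  have hv₁ := w_v hCAR hΘ hi m₁
  have hv₂ := w_v hCAR hΘ hi m₂
  have hv₃ := w_v hCAR hΘ hi m₃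
  have hv₄ := w_v hCAR hΘ hi m₄
  refine ⟨w₄, w₂, -w₃, w₁, m₄, m₂, neg_mem m₃, m₁, ?_⟩
  have e : (w₁ + a i * w₂ + star (a i) * w₃ + carV a i * w₄) * carV a i
      = w₁ * carV a i + a i * (w₂ * carV a i) + star (a i) * (w₃ * carV a i)
        + carV a i * (w₄ * carV a i) := by noncomm_ring
  rw [e, hv₁, hv₂, hv₃, hv₄]
  have e2 : carV a i * w₁ + a i * (carV a i * w₂) + star (a i) * (carV a i * w₃)
      + carV a i * (carV a i * w₄)
      = carV a i * w₁ + (a i * carV a i) * w₂ + (star (a i) * carV a i) * w₃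
        + (carV a i * carV a i) * w₄ := by noncomm_ring
  rw [e2, b_mul_v hCAR i, s_mul_v hCAR i, v_mul_v hCAR i]
  noncomm_ring

private lemma sp4_star {z : A} (h : Sp4 a i t z) : Sp4 a i t (star z) := by
  obtain ⟨w₁, w₂, w₃, w₄, m₁, m₂, m₃, m₄, rfl⟩ := h
  have q₂ := (qlem hCAR hΘ hi (star_mem m₂ : star w₂ ∈ AK a t)).2
  have q₃ := (qlem hCAR hΘ hi (star_mem m₃ : star w₃ ∈ AK a t)).1
  have hv₄ := w_v hCAR hΘ hi (star_mem m₄ : star w₄ ∈ AK a t)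
  refine ⟨star w₁, Θ (star w₃), Θ (star w₂), star w₄, star_mem m₁,
    thetaMem hΘ (star_mem m₃), thetaMem hΘ (star_mem m₂), star_mem m₄, ?_⟩
  have e : star (w₁ + a i * w₂ + star (a i) * w₃ + carV a i * w₄)
      = star w₁ + star w₂ * star (a i) + star w₃ * a i + star w₄ * carV a i := by
    simp only [star_add, star_mul, star_star, v_star hCAR i]
  rw [e, q₂, q₃, hv₄]
  abel

private lemma span4 {z : A} (hz : z ∈ AK a (insert i t)) : Sp4 a i t z := by
  induction hz using StarAlgebra.adjoin_induction with
  | mem y hy =>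
    obtain ⟨k, hk, rfl⟩ := hy
    rcases Set.mem_insert_iff.1 hk with hk | hk
    · subst hk
      exact ⟨0, 1, 0, 0, zero_mem _, one_mem _, zero_mem _, zero_mem _, by noncomm_ring⟩
    · exact ⟨a k, 0, 0, 0, StarAlgebra.subset_adjoin ℂ _ ⟨k, hk, rfl⟩, zero_mem _,
        zero_mem _, zero_mem _, by noncomm_ring⟩
  | algebraMap r =>
    exact ⟨algebraMap ℂ A r, 0, 0, 0, algebraMap_mem _ r, zero_mem _, zero_mem _,
      zero_mem _, by noncomm_ring⟩
  | add x y hx hy ihx ihy => exact sp4_add ihx ihy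
  | mul x y hx hy ihx ihy =>
    obtain ⟨u₁, u₂, u₃, u₄, n₁, n₂, n₃, n₄, rfl⟩ := ihy
    have e : x * (u₁ + a i * u₂ + star (a i) * u₃ + carV a i * u₄)
        = x * u₁ + (x * a i) * u₂ + (x * star (a i)) * u₃ + (x * carV a i) * u₄ := by
      noncomm_ring
    rw [e]
    exact sp4_add (sp4_add (sp4_add (sp4_mul_w hCAR hΘ hi ihx n₁)
      (sp4_mul_w hCAR hΘ hi (sp4_mul_b hCAR hΘ hi ihx) n₂))
      (sp4_mul_w hCAR hΘ hi (sp4_mul_s hCAR hΘ hi ihx) n₃))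
      (sp4_mul_w hCAR hΘ hi (sp4_mul_v hCAR hΘ hi ihx) n₄)
  | star x hx ih => exact sp4_star hCAR hΘ hi ih

end Span

private lemma e_form (hCAR : IsCAR a) (hΘ : ∀ i, Θ (a i) = - a i) {i : ι} {t : Set ι}
    (hi : i ∉ t) {z : A} (hz : z ∈ AK a (insert i t)) :
    ∃ p q, p ∈ AK a t ∧ Θ p = p ∧ q ∈ AK a t ∧ Θ q = -q ∧
      carE a i z = p + carV a i * q := by
  obtain ⟨w₁, w₂, w₃, w₄, m₁, m₂, m₃, m₄, rfl⟩ := span4 hCAR hΘ hi hz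
  refine ⟨(2:ℂ)⁻¹ • (w₁ + Θ w₁), (2:ℂ)⁻¹ • (w₄ - Θ w₄),
    SMulMemClass.smul_mem _ (add_mem m₁ (thetaMem hΘ m₁)),
    by rw [map_smul, map_add, theta2 hΘ m₁, add_comm],
    SMulMemClass.smul_mem _ (sub_mem m₄ (thetaMem hΘ m₄)),
    by rw [map_smul, map_sub, theta2 hΘ m₄, ← smul_neg, neg_sub], ?_⟩
  rw [e_add, e_add, e_add, e_w hCAR hΘ hi m₁, e_bw hCAR hΘ hi m₂,
    e_sw hCAR hΘ hi m₃, e_vw hCAR hΘ hi m₄]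
  abel

private lemma main4 (hCAR : IsCAR a) (hΘ : ∀ i, Θ (a i) = - a i) :
    ∀ (I : Finset ι) (K : Set ι), (∀ j ∈ I, j ∉ K) →
    ∀ z ∈ AK a (↑I ∪ K), (∀ j ∈ I, z * a j = a j * z ∧ z * star (a j) = star (a j) * z) →
    ∃ v p q, v ∈ AK a ↑I ∧ Θ v = v ∧ p ∈ AK a K ∧ Θ p = p ∧ q ∈ AK a K ∧ Θ q = -q ∧
      z = p + v * q := by
  intro I
  induction I using Finset.induction_on with
  | empty =>
    intro K hd z hz hcomm
    have hz' : z ∈ AK a K := by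
      simpa [Finset.coe_empty, Set.empty_union] using hz
    refine ⟨1, (2:ℂ)⁻¹ • (z + Θ z), (2:ℂ)⁻¹ • (z - Θ z), one_mem _, map_one Θ,
      SMulMemClass.smul_mem _ (add_mem hz' (thetaMem hΘ hz')),
      by rw [map_smul, map_add, theta2 hΘ hz', add_comm],
      SMulMemClass.smul_mem _ (sub_mem hz' (thetaMem hΘ hz')),
      by rw [map_smul, map_sub, theta2 hΘ hz', ← smul_neg, neg_sub], ?_⟩
    rw [one_mul]; module
  | @insert i I' hiI' ih =>
    intro K hd z hz hcomm
    have hiK : i ∉ K := hd i (Finset.mem_insert_self i I')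
    have hi' : i ∉ (↑I' ∪ K : Set ι) := by
      intro h
      rcases h with h | h
      · exact hiI' (by exact_mod_cast h)
      · exact hiK h
    have hz' : z ∈ AK a (insert i (↑I' ∪ K)) := by
      have hu : ((insert i I' : Finset ι) : Set ι) ∪ K = insert i (↑I' ∪ K) := by
        rw [Finset.coe_insert, Set.insert_union]
      rwa [hu] at hz
    have hcz := hcomm i (Finset.mem_insert_self i I')
    have hfix : carE a i z = z := e_fix hCAR i hcz.1 hcz.2
    obtain ⟨p₀, q₀, hp₀m, hp₀e, hq₀m, hq₀o, heq⟩ := e_form hCAR hΘ hi' hz'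
    rw [hfix] at heq
    -- heq : z = p₀ + carV a i * q₀
    have hΘz : Θ z = p₀ - carV a i * q₀ := by
      rw [heq, map_add, map_mul, v_theta hCAR i hΘ, hp₀e, hq₀o, mul_neg, ← sub_eq_add_neg]
    have hpp : p₀ + p₀ = z + Θ z := by rw [hΘz, heq]; abel
    have hvq : carV a i * q₀ + carV a i * q₀ = z - Θ z := by rw [hΘz, heq]; abel
    have hq₀v : q₀ = carV a i * (carV a i * q₀) :=
      calc q₀ = 1 * q₀ := (one_mul q₀).symm
        _ = (carV a i * carV a i) * q₀ := by rw [v_mul_v hCAR i]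
        _ = carV a i * (carV a i * q₀) := mul_assoc _ _ _
    -- commutation facts for p₀ and q₀
    have hjcomm : ∀ j ∈ I', ∀ u : A, (z * u = u * z) → (Θ z * u = u * Θ z) →
        (u * carV a i = carV a i * u) →
        (p₀ * u = u * p₀ ∧ q₀ * u = u * q₀) := by
      intro j hj u hzu hΘzu huv
      have hp : p₀ * u = u * p₀ := by
        refine half_eq ?_
        have e1 : p₀ * u + p₀ * u = (p₀ + p₀) * u := by noncomm_ring
        have e2 : u * p₀ + u * p₀ = u * (p₀ + p₀) := by noncomm_ring
        rw [e1, e2, hpp, add_mul, mul_add, hzu, hΘzu]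
      have hvqu : (carV a i * q₀) * u = u * (carV a i * q₀) := by
        refine half_eq ?_
        have e1 : (carV a i * q₀) * u + (carV a i * q₀) * u
            = (carV a i * q₀ + carV a i * q₀) * u := by noncomm_ring
        have e2 : u * (carV a i * q₀) + u * (carV a i * q₀)
            = u * (carV a i * q₀ + carV a i * q₀) := by noncomm_ring
        rw [e1, e2, hvq, sub_mul, mul_sub, hzu, hΘzu]
      constructor
      · exact hp
      · calc q₀ * u = carV a i * (carV a i * q₀) * u := by rw [← hq₀v]
          _ = carV a i * ((carV a i * q₀) * u) := by rw [mul_assoc]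
          _ = carV a i * (u * (carV a i * q₀)) := by rw [hvqu]
          _ = (carV a i * u) * (carV a i * q₀) := by rw [mul_assoc]
          _ = (u * carV a i) * (carV a i * q₀) := by rw [huv]
          _ = u * (carV a i * (carV a i * q₀)) := by rw [mul_assoc]
          _ = u * q₀ := by rw [← hq₀v]
    have hcomm' : ∀ j ∈ I',
        (p₀ * a j = a j * p₀ ∧ p₀ * star (a j) = star (a j) * p₀) ∧
        (q₀ * a j = a j * q₀ ∧ q₀ * star (a j) = star (a j) * q₀) := by
      intro j hj
      have hij : i ≠ j := fun h => hiI' (h ▸ hj)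
      have haj : a j ∈ AK a {j} := StarAlgebra.subset_adjoin ℂ _ ⟨j, rfl, rfl⟩
      have hsaj : star (a j) ∈ AK a ({j} : Set ι) := star_mem haj
      have hjnotin : i ∉ ({j} : Set ι) := by simpa using hij
      have hz1 := (hcomm j (Finset.mem_insert_of_mem hj)).1
      have hz2 := (hcomm j (Finset.mem_insert_of_mem hj)).2
      have hΘz1 : Θ z * a j = a j * Θ z := by
        have := congrArg Θ hz1
        rw [map_mul, map_mul, hΘ j, mul_neg, neg_mul, neg_inj] at this
        exact this
      have hΘz2 : Θ z * star (a j) = star (a j) * Θ z := by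
        have := congrArg Θ hz2
        rw [map_mul, map_mul, map_star Θ (a j), hΘ j, star_neg, mul_neg, neg_mul,
          neg_inj] at this
        exact this
      have hv1 : a j * carV a i = carV a i * a j := w_v hCAR hΘ hjnotin haj
      have hv2 : star (a j) * carV a i = carV a i * star (a j) := w_v hCAR hΘ hjnotin hsaj
      exact ⟨⟨(hjcomm j hj (a j) hz1 hΘz1 hv1).1, (hjcomm j hj (star (a j)) hz2 hΘz2 hv2).1⟩,
        ⟨(hjcomm j hj (a j) hz1 hΘz1 hv1).2, (hjcomm j hj (star (a j)) hz2 hΘz2 hv2).2⟩⟩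
    have hdI' : ∀ j ∈ I', j ∉ K := fun j hj => hd j (Finset.mem_insert_of_mem hj)
    obtain ⟨v', p₁, q₁, hv'm, hv'e, hp₁m, hp₁e, hq₁m, hq₁o, hpeq⟩ :=
      ih K hdI' p₀ hp₀m (fun j hj => (hcomm' j hj).1)
    obtain ⟨v'', p₂, q₂, hv''m, hv''e, hp₂m, hp₂e, hq₂m, hq₂o, hqeq⟩ :=
      ih K hdI' q₀ hq₀m (fun j hj => (hcomm' j hj).2)
    -- p₀ is even hence p₀ = p₁
    have hΘp₀ : Θ p₀ = p₁ - v' * q₁ := by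
      rw [hpeq, map_add, map_mul, hv'e, hp₁e, hq₁o, mul_neg, ← sub_eq_add_neg]
    have hp₀p₁ : p₀ = p₁ := by
      refine half_eq ?_
      calc p₀ + p₀ = p₀ + Θ p₀ := by rw [hp₀e]
        _ = (p₁ + v' * q₁) + (p₁ - v' * q₁) := by rw [← hpeq, ← hΘp₀]
        _ = p₁ + p₁ := by abel
    -- q₀ is odd hence q₀ = v'' * q₂
    have hΘq₀ : Θ q₀ = p₂ - v'' * q₂ := by
      rw [hqeq, map_add, map_mul, hv''e, hp₂e, hq₂o, mul_neg, ← sub_eq_add_neg]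
    have hp₂0 : p₂ + p₂ = 0 := by
      have : p₂ + p₂ = q₀ + Θ q₀ := by rw [hΘq₀, hqeq]; abel
      rw [this, hq₀o]; abel
    have hq₀v'' : q₀ = v'' * q₂ := by
      rw [hqeq, double_zero hp₂0, zero_add]
    -- assemble
    have hvmem : carV a i ∈ AK a ↑(insert i I') := by
      refine v_mem hCAR i ?_
      rw [Finset.coe_insert]; exact Set.mem_insert i _
    have hmono : AK a ↑I' ≤ AK a ↑(insert i I') := by
      apply StarAlgebra.adjoin_le
      refine Set.Subset.trans ?_ (StarAlgebra.subset_adjoin ℂ _)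
      apply Set.image_mono
      rw [Finset.coe_insert]
      exact Set.subset_insert i _
    refine ⟨carV a i * v'', p₁, q₂, mul_mem hvmem (hmono hv''m),
      by rw [map_mul, v_theta hCAR i hΘ, hv''e], hp₁m, hp₁e, hq₂m, hq₂o, ?_⟩
    rw [heq, hp₀p₁, hq₀v'', mul_assoc]

section States
variable {φ : A → ℂ}

private lemma st_zero (hφ : IsState φ) : φ 0 = 0 := by
  have := hφ.2.1 0 0
  simpa using this

private lemma st_neg (hφ : IsState φ) (x : A) : φ (-x) = - φ x := by
  have := hφ.2.1 (-1) x
  simpa using this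

private lemma st_sub (hφ : IsState φ) (x y : A) : φ (x - y) = φ x - φ y := by
  rw [sub_eq_add_neg, hφ.1, st_neg hφ, sub_eq_add_neg]

private lemma st_posim (hφ : IsState φ) (x : A) : (φ (star x * x)).im = 0 := by
  have := hφ.2.2.2 x
  rw [Complex.le_def] at this
  exact this.2.symm

private lemma st_herm (hφ : IsState φ) (x : A) : φ (star x) = (starRingEnd ℂ) (φ x) := by
  have had := hφ.1
  have h1 : φ 1 = 1 := hφ.2.2.1
  have k1 : (φ (star x)).im + (φ x).im = 0 := by
    have e1 : star (x + 1) * (x + 1) = star x * x + (star x + (x + 1)) := by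
      simp only [star_add, star_one]; noncomm_ring
    have e2 : φ (star (x + 1) * (x + 1)) = φ (star x * x) + (φ (star x) + (φ x + 1)) := by
      rw [e1, had, had, had, h1]
    have him := st_posim hφ (x + 1)
    rw [e2] at him
    have him0 : (φ (star x * x)).im = 0 := st_posim hφ x
    simp only [Complex.add_im, him0, Complex.one_im] at him
    linarith
  have k2 : (φ (star x)).re - (φ x).re = 0 := by
    set u : A := Complex.I • (1:A) with hu
    have hsu : star u = -u := by
      rw [hu, star_smul, star_one, Complex.star_def, Complex.conj_I, neg_smul]
    have huu : u * u = -1 := by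
      rw [hu, smul_mul_assoc, one_mul, smul_smul, Complex.I_mul_I, neg_smul, one_smul]
    have hux : u * x = Complex.I • x := by rw [hu, smul_mul_assoc, one_mul]
    have hsxu : star x * u = Complex.I • star x := by rw [hu, mul_smul_comm, mul_one]
    have e1 : star (x + u) * (x + u)
        = star x * x + (Complex.I • star x + (-(Complex.I • x) + 1)) := by
      rw [star_add, hsu]
      have e : (star x + -u) * (x + u)
          = star x * x + (star x * u + (-(u * x) + -(u * u))) := by noncomm_ring
      rw [e, huu, hux, hsxu, neg_neg]
    have e2 : φ (star (x + u) * (x + u))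
        = φ (star x * x) + (Complex.I * φ (star x) + (-(Complex.I * φ x) + 1)) := by
      rw [e1, had, had, had, hφ.2.1, st_neg hφ, hφ.2.1, h1]
    have him := st_posim hφ (x + u)
    rw [e2] at him
    simp only [Complex.add_im, Complex.mul_im, Complex.neg_im, Complex.I_re, Complex.I_im,
      Complex.one_im, st_posim hφ x, zero_mul, one_mul, zero_add, add_zero] at him
    linarith
  refine Complex.ext ?_ ?_
  · rw [Complex.conj_re]; linarith
  · rw [Complex.conj_im]; linarith

end States

/-- product states across a CAR pair kill odd-odd products -/
private lemma oddodd (hCAR : IsCAR a) (hΘ : ∀ i, Θ (a i) = - a i) {sI sJ : Set ι}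
    (hdisj : ∀ i ∈ sI, i ∉ sJ) {φ : A → ℂ} (hφ : IsState φ)
    (hprod : ∀ x ∈ AK a sI, ∀ y ∈ AK a sJ, φ (x * y) = φ x * φ y)
    {z w : A} (hz : z ∈ AK a sI) (hzo : Θ z = -z) (hw : w ∈ AK a sJ) (hwo : Θ w = -w) :
    φ z * φ w = 0 := by
  have sa_case : ∀ z' ∈ AK a sI, Θ z' = -z' → star z' = z' →
      ∀ w' ∈ AK a sJ, Θ w' = -w' → star w' = w' → φ z' * φ w' = 0 := by
    intro z' hz' hzo' hsz w' hw' hwo' hsw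
    have anti : w' * z' = -(z' * w') := by
      have h := sc hCAR hΘ hdisj hz' w' hw'
      rw [hzo', hwo'] at h
      refine half_eq ?_
      rw [h]; noncomm_ring
    have hskew : star (z' * w') = -(z' * w') := by
      rw [star_mul, hsz, hsw, anti]
    have hconjeq := st_herm hφ (z' * w')
    rw [hskew, st_neg hφ] at hconjeq
    have hval : φ (z' * w') = φ z' * φ w' := hprod z' hz' w' hw'
    rw [hval] at hconjeq
    have hrz : (φ z').im = 0 := by
      have := st_herm hφ z'
      rw [hsz] at this
      exact Complex.conj_eq_iff_im.mp this.symm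
    have hrw : (φ w').im = 0 := by
      have := st_herm hφ w'
      rw [hsw] at this
      exact Complex.conj_eq_iff_im.mp this.symm
    have htim : (φ z' * φ w').im = 0 := by
      rw [Complex.mul_im, hrz, hrw]; ring
    have hct : (starRingEnd ℂ) (φ z' * φ w') = φ z' * φ w' :=
      Complex.conj_eq_iff_im.mpr htim
    rw [hct] at hconjeq
    linear_combination (-(1:ℂ)/2) * hconjeq
  have hIcoef : Complex.I * (-(Complex.I) * (2:ℂ)⁻¹) = (2:ℂ)⁻¹ := by
    rw [show Complex.I * (-(Complex.I) * (2:ℂ)⁻¹)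
      = -(Complex.I * Complex.I) * (2:ℂ)⁻¹ from by ring, Complex.I_mul_I]
    norm_num
  have hconj2 : star ((2:ℂ)⁻¹) = (2:ℂ)⁻¹ := by
    rw [Complex.star_def, map_inv₀, Complex.conj_ofNat]
  have hconjc : star (-(Complex.I) * (2:ℂ)⁻¹) = Complex.I * (2:ℂ)⁻¹ := by
    rw [Complex.star_def, map_mul, map_neg, Complex.conj_I, map_inv₀,
      Complex.conj_ofNat, neg_neg]
  have mk : ∀ (sK : Set ι) (u : A), u ∈ AK a sK → Θ u = -u →
      ∃ u₁ u₂, u₁ ∈ AK a sK ∧ u₂ ∈ AK a sK ∧ Θ u₁ = -u₁ ∧ Θ u₂ = -u₂ ∧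
        star u₁ = u₁ ∧ star u₂ = u₂ ∧ φ u = φ u₁ + Complex.I * φ u₂ := by
    intro sK u hu huo
    have hsuo : Θ (star u) = - star u := by
      rw [map_star Θ u, huo, star_neg]
    refine ⟨(2:ℂ)⁻¹ • (u + star u), (-(Complex.I) * (2:ℂ)⁻¹) • (u - star u),
      SMulMemClass.smul_mem _ (add_mem hu (star_mem hu)),
      SMulMemClass.smul_mem _ (sub_mem hu (star_mem hu)), ?_, ?_, ?_, ?_, ?_⟩
    · rw [map_smul, map_add, huo, hsuo, ← smul_neg, neg_add]
    · rw [map_smul, map_sub, huo, hsuo,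
        show -u - -(star u) = -(u - star u) from by abel, smul_neg]
    · rw [star_smul, star_add, star_star, hconj2, add_comm]
    · rw [star_smul, star_sub, star_star, hconjc,
        show star u - u = -(u - star u) from by abel, smul_neg, ← neg_smul,
        show -(Complex.I * (2:ℂ)⁻¹) = -(Complex.I) * (2:ℂ)⁻¹ from by ring]
    · have hdec : u = (2:ℂ)⁻¹ • (u + star u)
          + Complex.I • ((-(Complex.I) * (2:ℂ)⁻¹) • (u - star u)) := by
        rw [smul_smul, hIcoef]
        module
      have h2 := congrArg φ hdec
      rw [hφ.1, hφ.2.1 Complex.I] at h2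
      exact h2
  obtain ⟨z₁, z₂, hz₁m, hz₂m, hz₁o, hz₂o, hz₁s, hz₂s, hφz⟩ := mk sI z hz hzo
  obtain ⟨w₁, w₂, hw₁m, hw₂m, hw₁o, hw₂o, hw₁s, hw₂s, hφw⟩ := mk sJ w hw hwo
  have h11 := sa_case z₁ hz₁m hz₁o hz₁s w₁ hw₁m hw₁o hw₁s
  have h12 := sa_case z₁ hz₁m hz₁o hz₁s w₂ hw₂m hw₂o hw₂s
  have h21 := sa_case z₂ hz₂m hz₂o hz₂s w₁ hw₁m hw₁o hw₁s
  have h22 := sa_case z₂ hz₂m hz₂o hz₂s w₂ hw₂m hw₂o hw₂s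
  rw [hφz, hφw]
  linear_combination h11 + Complex.I * h12
    + Complex.I * h21 + Complex.I * Complex.I * h22

end Aux

/-- for disjoint finite `I`, `J`, an even state that is separable for the CAR
pair `(A(I), A(J))` is also separable for the tensor product pair `(A(I), A(I)')`, where
`A(I)'` is the commutant of `A(I)` in `A(I ∪ J)`. -/
theorem even_car_separable_implies_tensor_separable
    {A : Type*} [Ring A] [StarRing A] [Algebra ℂ A] [StarModule ℂ A]
    {ι : Type*} [DecidableEq ι] (a : ι → A) (hCAR : IsCAR a)
    (Θ : A ≃⋆ₐ[ℂ] A) (hΘ : ∀ i, Θ (a i) = - a i)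
    (I J : Finset ι) (hdisj : Disjoint I J)
    (hgen : StarAlgebra.adjoin ℂ (a '' ((I ∪ J : Finset ι) : Set ι))
      = (⊤ : StarSubalgebra ℂ A))
    (ω : A → ℂ) (hω : IsState ω) (heven : ∀ x, ω (Θ x) = ω x)
    (hsep : IsSeparableState ω (StarAlgebra.adjoin ℂ (a '' (I : Set ι)) : Set A)
      (StarAlgebra.adjoin ℂ (a '' (J : Set ι)) : Set A)) :
    IsSeparableState ω (StarAlgebra.adjoin ℂ (a '' (I : Set ι)) : Set A)
      (Set.centralizer (StarAlgebra.adjoin ℂ (a '' (I : Set ι)) : Set A)) := by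
  obtain ⟨n, lam, φ, hpos, hsum1, hstates, hprod, hrep⟩ := hsep
  have hdisj' : ∀ j ∈ (I : Set ι), j ∉ (J : Set ι) := by
    intro j hj hj'
    exact Finset.disjoint_left.mp hdisj (by exact_mod_cast hj) (by exact_mod_cast hj')
  have htop : ∀ x : A, x ∈ AK a ((I : Set ι) ∪ (J : Set ι)) := by
    intro x
    have hg := hgen
    rw [Finset.coe_union] at hg
    have htriv : x ∈ (⊤ : StarSubalgebra ℂ A) := trivial
    rwa [← hg] at htriv
  have hth2 : ∀ x : A, Θ (Θ x) = x := fun x => theta2 hΘ (htop x)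
  -- structure of centralizer elements
  have hcent : ∀ y ∈ Set.centralizer
      ((StarAlgebra.adjoin ℂ (a '' (I : Set ι)) : StarSubalgebra ℂ A) : Set A),
      ∃ v p q, v ∈ AK a (I : Set ι) ∧ Θ v = v ∧ p ∈ AK a (J : Set ι) ∧ Θ p = p ∧
        q ∈ AK a (J : Set ι) ∧ Θ q = -q ∧ y = p + v * q := by
    intro y hy
    have hcm : ∀ j ∈ I, y * a j = a j * y ∧ y * star (a j) = star (a j) * y := by
      intro j hj
      have haj : a j ∈ (StarAlgebra.adjoin ℂ (a '' (I : Set ι)) : StarSubalgebra ℂ A) :=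
        StarAlgebra.subset_adjoin ℂ _ ⟨j, by exact_mod_cast hj, rfl⟩
      exact ⟨(hy (a j) haj).symm, (hy (star (a j)) (star_mem haj)).symm⟩
    exact main4 hCAR hΘ I (J : Set ι) (fun j hj => hdisj' j (by exact_mod_cast hj)) y
      (htop y) hcm
  refine ⟨n, lam, fun k z => (2:ℂ)⁻¹ * (φ k z + φ k (Θ z)), hpos, hsum1, ?_, ?_, ?_⟩
  · -- each even average is a state
    intro k
    have hst := hstates k
    dsimp only
    refine ⟨?_, ?_, ?_, ?_⟩
    · intro x y
      beta_reduce
      rw [map_add, hst.1, hst.1]; ring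
    · intro c x
      beta_reduce
      rw [map_smul, hst.2.1, hst.2.1]; ring
    · beta_reduce
      rw [map_one, hst.2.2.1]; norm_num
    · intro x
      beta_reduce
      have h1 := hst.2.2.2 x
      have h2 := hst.2.2.2 (Θ x)
      have he : Θ (star x * x) = star (Θ x) * Θ x := by rw [map_mul, map_star Θ x]
      rw [he]
      have hhalf : (0:ℂ) ≤ (2:ℂ)⁻¹ := by rw [Complex.le_def]; norm_num
      exact mul_nonneg hhalf (add_nonneg h1 h2)
  · -- product property for the pair (A(I), A(I)')
    intro k x hx y hy
    obtain ⟨v, p, q, hvm, hve, hpm, hpe, hqm, hqo, hyeq⟩ := hcent y hy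
    have hst := hstates k
    have hxA : x ∈ AK a (I : Set ι) := hx
    have hΘx : Θ x ∈ AK a (I : Set ι) := thetaMem hΘ hxA
    have hxv : x * v ∈ AK a (I : Set ι) := mul_mem hxA hvm
    have hΘxv : Θ x * v ∈ AK a (I : Set ι) := mul_mem hΘx hvm
    have hexp1 : φ k (x * y) = φ k x * φ k p + φ k (x * v) * φ k q := by
      rw [show x * y = x * p + (x * v) * q from by rw [hyeq]; noncomm_ring, hst.1,
        hprod k x hx p hpm, hprod k (x * v) hxv q hqm]
    have hexp2 : φ k (Θ (x * y)) = φ k (Θ x) * φ k p - φ k (Θ x * v) * φ k q := by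
      have hΘxy : Θ (x * y) = Θ x * p - (Θ x * v) * q := by
        rw [hyeq, map_mul, map_add, map_mul, hve, hpe, hqo]
        noncomm_ring
      rw [hΘxy, st_sub hst, hprod k (Θ x) hΘx p hpm, hprod k (Θ x * v) hΘxv q hqm]
    -- odd-odd cancellation
    have hoddmem : (2:ℂ)⁻¹ • (x * v - Θ x * v) ∈ AK a (I : Set ι) :=
      SMulMemClass.smul_mem _ (sub_mem hxv hΘxv)
    have hoddpar : Θ ((2:ℂ)⁻¹ • (x * v - Θ x * v)) = -((2:ℂ)⁻¹ • (x * v - Θ x * v)) := by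
      rw [map_smul, map_sub, map_mul, map_mul, hve, hth2 x,
        show Θ x * v - x * v = -(x * v - Θ x * v) from by abel, smul_neg]
    have hodd := oddodd hCAR hΘ hdisj' hst (fun x' hx' y' hy' => hprod k x' hx' y' hy')
      hoddmem hoddpar hqm hqo
    have hsubval : φ k ((2:ℂ)⁻¹ • (x * v - Θ x * v))
        = (2:ℂ)⁻¹ * (φ k (x * v) - φ k (Θ x * v)) := by
      rw [hst.2.1, st_sub hst]
    rw [hsubval] at hodd
    have hψy : (2:ℂ)⁻¹ * (φ k y + φ k (Θ y)) = φ k p := by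
      have hΘy : Θ y = p - v * q := by
        rw [hyeq, map_add, map_mul, hve, hpe, hqo, mul_neg, ← sub_eq_add_neg]
      rw [hΘy, hyeq, hst.1, st_sub hst]
      ring
    show (2:ℂ)⁻¹ * (φ k (x * y) + φ k (Θ (x * y)))
        = ((2:ℂ)⁻¹ * (φ k x + φ k (Θ x))) * ((2:ℂ)⁻¹ * (φ k y + φ k (Θ y)))
    rw [hexp1, hexp2, hψy]
    linear_combination hodd
  · -- the representation of ω on products
    intro x hx y hy
    obtain ⟨v, p, q, hvm, hve, hpm, hpe, hqm, hqo, hyeq⟩ := hcent y hy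
    have hxA : x ∈ AK a (I : Set ι) := hx
    have hΘxA : Θ x ∈ AK a (I : Set ι) := thetaMem hΘ hxA
    have hvanish : ∀ x' : A, x' ∈ AK a (I : Set ι) → ω ((x' * v) * q) = 0 := by
      intro x' hx'
      have hx'v : x' * v ∈ AK a (I : Set ι) := mul_mem hx' hvm
      have hΘx'v : Θ x' * v ∈ AK a (I : Set ι) := mul_mem (thetaMem hΘ hx') hvm
      have hdecomp : (x' * v) * q
          = ((2:ℂ)⁻¹ • (x' * v + Θ x' * v)) * q + ((2:ℂ)⁻¹ • (x' * v - Θ x' * v)) * q := by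
        have hsum : (2:ℂ)⁻¹ • (x' * v + Θ x' * v) + (2:ℂ)⁻¹ • (x' * v - Θ x' * v)
            = x' * v := by module
        rw [← add_mul, hsum]
      have h1 : ω (((2:ℂ)⁻¹ • (x' * v + Θ x' * v)) * q) = 0 := by
        have hΘr : Θ (((2:ℂ)⁻¹ • (x' * v + Θ x' * v)) * q)
            = -(((2:ℂ)⁻¹ • (x' * v + Θ x' * v)) * q) := by
          rw [map_mul, map_smul, map_add, map_mul, map_mul, hve, hth2 x', hqo, mul_neg,
            add_comm]
        have hev := heven (((2:ℂ)⁻¹ • (x' * v + Θ x' * v)) * q)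
        rw [hΘr, st_neg hω] at hev
        linear_combination (-(1:ℂ)/2) * hev
      have h2 : ω (((2:ℂ)⁻¹ • (x' * v - Θ x' * v)) * q) = 0 := by
        have hmem : (2:ℂ)⁻¹ • (x' * v - Θ x' * v) ∈ AK a (I : Set ι) :=
          SMulMemClass.smul_mem _ (sub_mem hx'v hΘx'v)
        have hpar : Θ ((2:ℂ)⁻¹ • (x' * v - Θ x' * v))
            = -((2:ℂ)⁻¹ • (x' * v - Θ x' * v)) := by
          rw [map_smul, map_sub, map_mul, map_mul, hve, hth2 x',
            show Θ x' * v - x' * v = -(x' * v - Θ x' * v) from by abel, smul_neg]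
        have hre := hrep ((2:ℂ)⁻¹ • (x' * v - Θ x' * v)) hmem q hqm
        have hzero : ∀ k, φ k (((2:ℂ)⁻¹ • (x' * v - Θ x' * v)) * q) = 0 := by
          intro k
          rw [hprod k ((2:ℂ)⁻¹ • (x' * v - Θ x' * v)) hmem q hqm]
          exact oddodd hCAR hΘ hdisj' (hstates k)
            (fun a' ha' b' hb' => hprod k a' ha' b' hb') hmem hpar hqm hqo
        rw [hre]
        exact Finset.sum_eq_zero (fun k _ => by rw [hzero k, mul_zero])
      rw [hdecomp, hω.1, h1, h2, add_zero]
    have hLHS : ω (x * y) = ω (x * p) := by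
      rw [show x * y = x * p + (x * v) * q from by rw [hyeq]; noncomm_ring, hω.1,
        hvanish x hxA, add_zero]
    have hΘxp : ω (Θ x * p) = ω (x * p) := by
      have := heven (Θ x * p)
      rw [map_mul, hth2 x, hpe] at this
      exact this.symm
    have hsummand : ∀ k, (lam k : ℂ) * ((2:ℂ)⁻¹ * (φ k (x * y) + φ k (Θ (x * y))))
        = (2:ℂ)⁻¹ * (((lam k : ℂ) * φ k (x * p) + (lam k : ℂ) * φ k ((x * v) * q))
          + ((lam k : ℂ) * φ k ((Θ x) * p) - (lam k : ℂ) * φ k ((Θ x * v) * q))) := by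
      intro k
      have hst := hstates k
      have he1 : φ k (x * y) = φ k (x * p) + φ k ((x * v) * q) := by
        rw [show x * y = x * p + (x * v) * q from by rw [hyeq]; noncomm_ring, hst.1]
      have he2 : φ k (Θ (x * y)) = φ k (Θ x * p) - φ k ((Θ x * v) * q) := by
        have hΘxy : Θ (x * y) = Θ x * p - (Θ x * v) * q := by
          rw [hyeq, map_mul, map_add, map_mul, hve, hpe, hqo]
          noncomm_ring
        rw [hΘxy, st_sub hst]
      rw [he1, he2]; ring
    calc ω (x * y) = ω (x * p) := hLHS
      _ = (2:ℂ)⁻¹ * ((ω (x * p) + ω ((x * v) * q)) + (ω (Θ x * p) - ω ((Θ x * v) * q))) := by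
          rw [hvanish x hxA, hvanish (Θ x) hΘxA, hΘxp]; ring
      _ = (2:ℂ)⁻¹ * (((∑ k, (lam k : ℂ) * φ k (x * p)) + ∑ k, (lam k : ℂ) * φ k ((x * v) * q))
          + ((∑ k, (lam k : ℂ) * φ k ((Θ x) * p)) - ∑ k, (lam k : ℂ) * φ k ((Θ x * v) * q))) := by
          rw [hrep x hx p hpm, hrep (x * v) (mul_mem hxA hvm) q hqm,
            hrep (Θ x) hΘxA p hpm, hrep (Θ x * v) (mul_mem hΘxA hvm) q hqm]
      _ = ∑ k, (lam k : ℂ) * ((2:ℂ)⁻¹ * (φ k (x * y) + φ k (Θ (x * y)))) := by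
          rw [Finset.sum_congr rfl (fun k _ => hsummand k)]
          rw [← Finset.mul_sum, Finset.sum_add_distrib, Finset.sum_add_distrib,
            Finset.sum_sub_distrib]
end

section
/- For the state φ_λ with density 1 + λK, K = (1/2)(K₁†K₂ − K₁K₂†), and all A ∈ A(I), B ∈ A(J), one has φ_λ(AB) = τ(A₊)τ(B₊) − (λ/2)[τ(K₁†A₋)τ(K₂B₋) − τ(K₁A₋)τ(K₂†B₋)], where A = A₊ + A₋ and B = B₊ + B₋ are the even/odd decompositions. -/
open scoped ComplexOrder

/-- correlation functions of the state `φ_λ` with density `1 + λK`,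
`K = (1/2)(K₁†K₂ − K₁K₂†)`: for `A = A₊ + A₋ ∈ A(I)` and `B = B₊ + B₋ ∈ A(J)`,
`φ_λ(AB) = τ(A₊)τ(B₊) − (λ/2)[τ(K₁†A₋)τ(K₂B₋) − τ(K₁A₋)τ(K₂†B₋)]`. -/
theorem hopping_state_correlation
    {A : Type*} [Ring A] [StarRing A] [Algebra ℂ A] [StarModule ℂ A]
    {ι : Type*} [DecidableEq ι] (a : ι → A) (hCAR : IsCAR a)
    (Θ : A ≃⋆ₐ[ℂ] A) (hΘ : ∀ i, Θ (a i) = - a i)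
    (I J : Finset ι) (hdisj : Disjoint I J)
    (τ : A → ℂ) (hτ : IsState τ)
    (htrace : ∀ x y, τ (x * y) = τ (y * x))
    (hτprod : ∀ x ∈ StarAlgebra.adjoin ℂ (a '' (I : Set ι)),
      ∀ y ∈ StarAlgebra.adjoin ℂ (a '' (J : Set ι)), τ (x * y) = τ x * τ y)
    (hτeven : ∀ x, τ (Θ x) = τ x)
    (K₁ K₂ : A)
    (hK₁ : K₁ ∈ StarAlgebra.adjoin ℂ (a '' (I : Set ι))) (hK₁odd : Θ K₁ = - K₁)
    (hK₂ : K₂ ∈ StarAlgebra.adjoin ℂ (a '' (J : Set ι))) (hK₂odd : Θ K₂ = - K₂)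
    (K : A) (hK : K = ((1 : ℂ)/2) • (star K₁ * K₂ - K₁ * star K₂))
    (lam : ℝ)
    (x xp xm : A) (hx : x = xp + xm)
    (hxpI : xp ∈ StarAlgebra.adjoin ℂ (a '' (I : Set ι)))
    (hxmI : xm ∈ StarAlgebra.adjoin ℂ (a '' (I : Set ι)))
    (hxpe : Θ xp = xp) (hxmo : Θ xm = - xm)
    (y yp ym : A) (hy : y = yp + ym)
    (hypJ : yp ∈ StarAlgebra.adjoin ℂ (a '' (J : Set ι)))
    (hymJ : ym ∈ StarAlgebra.adjoin ℂ (a '' (J : Set ι)))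
    (hype : Θ yp = yp) (hymo : Θ ym = - ym) :
    τ ((1 + (lam : ℂ) • K) * (x * y)) =
      τ xp * τ yp - ((lam : ℂ)/2) *
        (τ (star K₁ * xm) * τ (K₂ * ym) - τ (K₁ * xm) * τ (star K₂ * ym)) := by
  obtain ⟨hcar1, hcar2, hcar3⟩ := hCAR
  obtain ⟨τadd, τsmul, τone, τpos⟩ := hτ
  have hΘalg : ∀ c : ℂ, Θ (algebraMap ℂ A c) = algebraMap ℂ A c := by
    intro c
    rw [Algebra.algebraMap_eq_smul_one, map_smul, map_one]
  -- Θ is an involution on each generated subalgebra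
  have L0 : ∀ (s : Set ι), ∀ u ∈ StarAlgebra.adjoin ℂ (a '' s), Θ (Θ u) = u := by
    intro s u hu
    induction hu using StarAlgebra.adjoin_induction with
    | mem z hz =>
      obtain ⟨i, _, rfl⟩ := hz
      rw [hΘ i, map_neg, hΘ i, neg_neg]
    | algebraMap c => rw [hΘalg, hΘalg]
    | add u v hu hv ihu ihv => rw [map_add, map_add, ihu, ihv]
    | mul u v hu hv ihu ihv => rw [map_mul, map_mul, ihu, ihv]
    | star u hu ihu => rw [map_star, map_star, ihu]
  have τneg : ∀ z, τ (-z) = - τ z := by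
    intro z
    have h := τsmul (-1) z
    simpa using h
  have τsub : ∀ u v, τ (u - v) = τ u - τ v := by
    intro u v
    rw [sub_eq_add_neg, τadd, τneg, sub_eq_add_neg]
  have τodd : ∀ z, Θ z = -z → τ z = 0 := by
    intro z hz
    have h1 : τ z = - τ z := by
      calc τ z = τ (Θ z) := (hτeven z).symm
        _ = τ (-z) := by rw [hz]
        _ = - τ z := τneg z
    linear_combination h1 / 2
  -- generators over I anticommute with everything odd-graded over J
  have LA : ∀ i ∈ I, ∀ v ∈ StarAlgebra.adjoin ℂ (a '' (J : Set ι)),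
      a i * v = Θ v * a i ∧ star (a i) * v = Θ v * star (a i) := by
    intro i hi v hv
    induction hv using StarAlgebra.adjoin_induction with
    | mem z hz =>
      obtain ⟨j, hj, rfl⟩ := hz
      have hij : i ≠ j := fun h => Finset.disjoint_left.mp hdisj hi (h ▸ hj)
      constructor
      · rw [hΘ j, neg_mul]
        exact eq_neg_of_add_eq_zero_left (hcar3 i j)
      · rw [hΘ j, neg_mul]
        refine eq_neg_of_add_eq_zero_left ?_
        rw [hcar1 i j, if_neg hij]
    | algebraMap c =>
      rw [hΘalg]
      exact ⟨(Algebra.commutes c (a i)).symm, (Algebra.commutes c (star (a i))).symm⟩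
    | add u v hu hv ihu ihv =>
      constructor
      · rw [mul_add, ihu.1, ihv.1, map_add, add_mul]
      · rw [mul_add, ihu.2, ihv.2, map_add, add_mul]
    | mul u v hu hv ihu ihv =>
      constructor
      · rw [map_mul, ← mul_assoc, ihu.1, mul_assoc, ihv.1, ← mul_assoc]
      · rw [map_mul, ← mul_assoc, ihu.2, mul_assoc, ihv.2, ← mul_assoc]
    | star u hu ihu =>
      have hΘΘu : Θ (Θ u) = u := L0 _ u hu
      have hΘΘs : Θ (Θ (star u)) = star u := by rw [map_star, map_star, hΘΘu]
      constructor
      · -- a i * star u = Θ (star u) * a i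
        have h1 : star u * a i = a i * Θ (star u) := by
          have := congrArg star ihu.2
          rw [star_mul, star_mul, star_star, ← map_star] at this
          exact this
        have h2 := congrArg Θ h1
        rw [map_mul, map_mul, hΘ i, hΘΘs, mul_neg, neg_mul, neg_inj] at h2
        exact h2.symm
      · -- star (a i) * star u = Θ (star u) * star (a i)
        have h1 : star u * star (a i) = star (a i) * Θ (star u) := by
          have := congrArg star ihu.1
          rw [star_mul, star_mul, ← map_star] at this
          exact this
        have h2 := congrArg Θ h1
        have hΘsi : Θ (star (a i)) = - star (a i) := by rw [map_star, hΘ i, star_neg]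
        rw [map_mul, map_mul, hΘsi, hΘΘs, mul_neg, neg_mul, neg_inj] at h2
        exact h2.symm
  -- odd elements of A(J) supercommute past A(I)
  have LB : ∀ u ∈ StarAlgebra.adjoin ℂ (a '' (I : Set ι)),
      ∀ v ∈ StarAlgebra.adjoin ℂ (a '' (J : Set ι)), Θ v = -v → v * u = Θ u * v := by
    intro u hu
    induction hu using StarAlgebra.adjoin_induction with
    | mem z hz =>
      obtain ⟨i, hi, rfl⟩ := hz
      intro v hv hvodd
      have h1 := (LA i hi v hv).1
      rw [hvodd, neg_mul] at h1
      rw [hΘ i, neg_mul]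
      have h0 : v * a i + a i * v = 0 := by rw [h1]; simp
      exact eq_neg_of_add_eq_zero_left h0
    | algebraMap c =>
      intro v hv hvodd
      rw [hΘalg]
      exact (Algebra.commutes c v).symm
    | add u w hu hw ihu ihw =>
      intro v hv hvodd
      rw [map_add, mul_add, add_mul, ihu v hv hvodd, ihw v hv hvodd]
    | mul u w hu hw ihu ihw =>
      intro v hv hvodd
      rw [map_mul, ← mul_assoc, ihu v hv hvodd, mul_assoc, ihw v hv hvodd, ← mul_assoc]
    | star u hu ihu =>
      intro v hv hvodd
      have hsv : star v ∈ StarAlgebra.adjoin ℂ (a '' (J : Set ι)) := star_mem hv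
      have hsvodd : Θ (star v) = - star v := by rw [map_star, hvodd, star_neg]
      have h1 := ihu (star v) hsv hsvodd
      have h2 := congrArg star h1
      rw [star_mul, star_mul, star_star, ← map_star] at h2
      have h3 := congrArg Θ h2
      have hΘΘs : Θ (Θ (star u)) = star u := by rw [map_star, map_star, L0 _ u hu]
      rw [map_mul, map_mul, hvodd, hΘΘs, mul_neg, neg_mul, neg_inj] at h3
      exact h3.symm
  -- basic parity facts
  have hsK₁odd : Θ (star K₁) = -(star K₁) := by rw [map_star, hK₁odd, star_neg]
  have hsK₂odd : Θ (star K₂) = -(star K₂) := by rw [map_star, hK₂odd, star_neg]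
  have hxI : x ∈ StarAlgebra.adjoin ℂ (a '' (I : Set ι)) := hx ▸ add_mem hxpI hxmI
  have hyJ : y ∈ StarAlgebra.adjoin ℂ (a '' (J : Set ι)) := hy ▸ add_mem hypJ hymJ
  have hΘx : Θ x = xp - xm := by rw [hx, map_add, hxpe, hxmo, sub_eq_add_neg]
  have hΘxI : Θ x ∈ StarAlgebra.adjoin ℂ (a '' (I : Set ι)) := by
    rw [hΘx]; exact sub_mem hxpI hxmI
  -- vanishing traces of odd elements
  have hτxm : τ xm = 0 := τodd xm hxmo
  have hτym : τ ym = 0 := τodd ym hymo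
  have hτsK₁xp : τ (star K₁ * xp) = 0 := by
    refine τodd _ ?_
    rw [map_mul, hsK₁odd, hxpe, neg_mul]
  have hτK₁xp : τ (K₁ * xp) = 0 := by
    refine τodd _ ?_
    rw [map_mul, hK₁odd, hxpe, neg_mul]
  have hτK₂yp : τ (K₂ * yp) = 0 := by
    refine τodd _ ?_
    rw [map_mul, hK₂odd, hype, neg_mul]
  have hτsK₂yp : τ (star K₂ * yp) = 0 := by
    refine τodd _ ?_
    rw [map_mul, hsK₂odd, hype, neg_mul]
  -- partial traces
  have hτx : τ x = τ xp := by rw [hx, τadd, hτxm, add_zero]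
  have hτy : τ y = τ yp := by rw [hy, τadd, hτym, add_zero]
  have hτsK₁Θx : τ (star K₁ * Θ x) = - τ (star K₁ * xm) := by
    rw [hΘx, mul_sub, τsub, hτsK₁xp, zero_sub]
  have hτK₁Θx : τ (K₁ * Θ x) = - τ (K₁ * xm) := by
    rw [hΘx, mul_sub, τsub, hτK₁xp, zero_sub]
  have hτK₂y : τ (K₂ * y) = τ (K₂ * ym) := by
    rw [hy, mul_add, τadd, hτK₂yp, zero_add]
  have hτsK₂y : τ (star K₂ * y) = τ (star K₂ * ym) := by
    rw [hy, mul_add, τadd, hτsK₂yp, zero_add]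
  -- first term
  have e1 : τ (x * y) = τ xp * τ yp := by
    rw [hτprod x hxI y hyJ, hτx, hτy]
  -- move K₂, star K₂ past x
  have hcomm₂ : K₂ * x = Θ x * K₂ := LB x hxI K₂ hK₂ hK₂odd
  have hcomm₂' : star K₂ * x = Θ x * star K₂ := LB x hxI (star K₂) (star_mem hK₂) hsK₂odd
  have t1 : τ ((star K₁ * K₂) * (x * y)) = -(τ (star K₁ * xm) * τ (K₂ * ym)) := by
    have hre : (star K₁ * K₂) * (x * y) = (star K₁ * Θ x) * (K₂ * y) := by
      rw [mul_assoc, ← mul_assoc K₂ x y, hcomm₂, mul_assoc (Θ x) K₂ y, ← mul_assoc]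
    rw [hre, hτprod _ (mul_mem (star_mem hK₁) hΘxI) _ (mul_mem hK₂ hyJ),
      hτsK₁Θx, hτK₂y]
    ring
  have t2 : τ ((K₁ * star K₂) * (x * y)) = -(τ (K₁ * xm) * τ (star K₂ * ym)) := by
    have hre : (K₁ * star K₂) * (x * y) = (K₁ * Θ x) * (star K₂ * y) := by
      rw [mul_assoc, ← mul_assoc (star K₂) x y, hcomm₂', mul_assoc (Θ x) (star K₂) y,
        ← mul_assoc]
    rw [hre, hτprod _ (mul_mem hK₁ hΘxI) _ (mul_mem (star_mem hK₂) hyJ),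
      hτK₁Θx, hτsK₂y]
    ring
  -- assemble
  have hKexp : (1 + (lam : ℂ) • K) * (x * y) =
      x * y + ((lam : ℂ) * (1/2)) • ((star K₁ * K₂) * (x * y) - (K₁ * star K₂) * (x * y)) := by
    rw [hK, add_mul, one_mul, smul_smul, smul_mul_assoc, sub_mul]
  rw [hKexp, τadd, τsmul, τsub, t1, t2, e1]
  push_cast
  ring
end

section
/- There is no product state extension of two noneven pure states on disjoint one-site CAR subalgebras: for I = {1}, J = {2}, the vector states given by |a⟩ = (|0⟩ + |1⟩)/√2 on A({1}) and |b⟩ = (|0⟩ + |1⟩)/√2 on A({2}) admit no state ω on A({1,2}) with ω(AB) = ⟨a|A|a⟩⟨b|B|b⟩ for all A ∈ A({1}), B ∈ A({2}). -/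
open scoped ComplexOrder

/-- A state is hermitian: `φ (star x) = conj (φ x)`. -/
lemma IsState.star_eq_conj {A : Type*} [Ring A] [StarRing A] [Algebra ℂ A] [StarModule ℂ A]
    {φ : A → ℂ} (h : IsState φ) (x : A) : φ (star x) = (starRingEnd ℂ) (φ x) := by
  obtain ⟨hadd, hsmul, h1, hpos⟩ := h
  have him : ∀ z : A, (φ (star z * z)).im = 0 := fun z => by
    have := hpos z
    rw [Complex.le_def] at this
    simpa using this.2.symm
  -- expand star (1+x) * (1+x)
  have e1 : star (1 + x) * (1 + x) = 1 + (x + (star x + star x * x)) := by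
    simp [star_add, mul_add, add_mul]; abel
  have e2 : star (1 + Complex.I • x) * (1 + Complex.I • x)
      = 1 + (Complex.I • x + ((-Complex.I) • star x + star x * x)) := by
    simp [star_add, star_smul, mul_add, add_mul, smul_smul, Complex.I_mul_I, neg_smul]
    abel
  have E1 : φ (star (1 + x) * (1 + x)) = 1 + (φ x + (φ (star x) + φ (star x * x))) := by
    rw [e1, hadd, hadd, hadd, h1]
  have E2 : φ (star (1 + Complex.I • x) * (1 + Complex.I • x))
      = 1 + (Complex.I * φ x + ((-Complex.I) * φ (star x) + φ (star x * x))) := by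
    rw [e2, hadd, hadd, hadd, h1, hsmul, hsmul]
  have i1 := him (1 + x)
  have i2 := him (1 + Complex.I • x)
  rw [E1] at i1
  rw [E2] at i2
  have ix := him x
  set p := φ x
  set q := φ (star x)
  simp only [Complex.add_im, Complex.one_im, Complex.mul_im, Complex.neg_im, Complex.neg_re,
    Complex.I_re, Complex.I_im, ix] at i1 i2
  apply Complex.ext <;> simp [Complex.conj_re, Complex.conj_im] <;> linarith

/-- there is no product state extension of the two noneven vector states given
by `|a⟩ = (|0⟩+|1⟩)/√2` on `A({1})` and `|b⟩ = (|0⟩+|1⟩)/√2` on `A({2})`.  These vector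
states are determined by the values `ω₁(a₁) = ω₁(a₁†) = ω₁(a₁†a₁) = 1/2` (and similarly for
`ω₂` with `a₂`). -/
theorem no_product_extension_of_noneven_vector_states
    {A : Type*} [Ring A] [StarRing A] [Algebra ℂ A] [StarModule ℂ A]
    {ι : Type*} [DecidableEq ι] (a : ι → A) (hCAR : IsCAR a)
    (i₁ i₂ : ι) (hne : i₁ ≠ i₂)
    (ω₁ ω₂ : A → ℂ) (hω₁ : IsState ω₁) (hω₂ : IsState ω₂)
    (hω₁a : ω₁ (a i₁) = 1/2) (hω₁ac : ω₁ (star (a i₁)) = 1/2)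
    (hω₁n : ω₁ (star (a i₁) * a i₁) = 1/2)
    (hω₂a : ω₂ (a i₂) = 1/2) (hω₂ac : ω₂ (star (a i₂)) = 1/2)
    (hω₂n : ω₂ (star (a i₂) * a i₂) = 1/2) :
    ¬ ∃ ω : A → ℂ, IsState ω ∧
      ∀ x ∈ StarAlgebra.adjoin ℂ (a '' {i₁}), ∀ y ∈ StarAlgebra.adjoin ℂ (a '' {i₂}),
        ω (x * y) = ω₁ x * ω₂ y := by
  rintro ⟨ω, hω, hprod⟩
  obtain ⟨h1, h2, h3⟩ := hCAR
  set x := a i₁ + star (a i₁) with hx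
  set y := a i₂ + star (a i₂) with hy
  have hxmem : x ∈ StarAlgebra.adjoin ℂ (a '' {i₁}) := by
    have : a i₁ ∈ (a '' {i₁}) := ⟨i₁, rfl, rfl⟩
    exact add_mem (StarAlgebra.subset_adjoin _ _ this)
      (star_mem (StarAlgebra.subset_adjoin _ _ this))
  have hymem : y ∈ StarAlgebra.adjoin ℂ (a '' {i₂}) := by
    have : a i₂ ∈ (a '' {i₂}) := ⟨i₂, rfl, rfl⟩
    exact add_mem (StarAlgebra.subset_adjoin _ _ this)
      (star_mem (StarAlgebra.subset_adjoin _ _ this))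
  have hω₁x : ω₁ x = 1 := by
    rw [hx, hω₁.1, hω₁a, hω₁ac]; norm_num
  have hω₂y : ω₂ y = 1 := by
    rw [hy, hω₂.1, hω₂a, hω₂ac]; norm_num
  have hxy : ω (x * y) = 1 := by
    rw [hprod x hxmem y hymem, hω₁x, hω₂y, one_mul]
  -- y * x = -(x * y)
  have hanti : y * x = -(x * y) := by
    have c1 := h3 i₁ i₂
    have c2 := h1 i₂ i₁
    have c3 := h1 i₁ i₂
    have c4 := h2 i₁ i₂
    rw [if_neg (Ne.symm hne)] at c2
    rw [if_neg hne] at c3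
    have : x * y + y * x = 0 := by
      rw [hx, hy]
      have expand : (a i₁ + star (a i₁)) * (a i₂ + star (a i₂)) +
          (a i₂ + star (a i₂)) * (a i₁ + star (a i₁)) =
          (a i₁ * a i₂ + a i₂ * a i₁) + (star (a i₂) * a i₁ + a i₁ * star (a i₂)) +
          (star (a i₁) * a i₂ + a i₂ * star (a i₁)) +
          (star (a i₁) * star (a i₂) + star (a i₂) * star (a i₁)) := by
        noncomm_ring
      rw [expand, c1, c2, c3, c4]; simp
    exact eq_neg_of_add_eq_zero_right this
  -- hermiticity: ω (y * x) = conj (ω (x * y)) = 1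
  have hstar : star (x * y) = y * x := by
    rw [star_mul]
    congr 1 <;> simp [hx, hy, add_comm]
  have hyx1 : ω (y * x) = 1 := by
    rw [← hstar, hω.star_eq_conj, hxy, map_one]
  have hyx2 : ω (y * x) = -1 := by
    have : y * x = (-1 : ℂ) • (x * y) := by rw [hanti]; simp
    rw [this, hω.2.1, hxy]; ring
  rw [hyx1] at hyx2
  norm_num at hyx2
end
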